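/- arXiv:math/9904153 — 3 statements merged into one kernel-verified Lean document; each statement's English description precedes it below -/
import Mathlib

section
/- For all positive integers m, p, all positive integers a_1, …, a_n with a_1 + ⋯ + a_n > mp, and all pairwise distinct complex numbers s_1, …, s_n, there is no p-dimensional complex subspace H ⊆ ℂ^{m+p} satisfying dim_ℂ(H ∩ K_{m+1−a_i}(s_i)) ≥ 1 for every i = 1, …, n. -/
/-- The `j`-th derivative of the moment curve `s ↦ (1, s, s², …, s^{N-1})` in `ℂ^N`:
its `i`-th coordinate is `i·(i-1)⋯(i-j+1) · s^{i-j}`. -/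
noncomputable def momentDeriv (N j : ℕ) (s : ℂ) : Fin N → ℂ :=
  fun i => (Nat.descFactorial (i : ℕ) j : ℂ) * s ^ ((i : ℕ) - j)

/-- The osculating `k`-plane `K_k(s)` to the rational normal curve at `s`:
the span of `γ(s), γ'(s), …, γ^{(k-1)}(s)`. -/
noncomputable def oscPlane (N k : ℕ) (s : ℂ) : Submodule ℂ (Fin N → ℂ) :=
  Submodule.span ℂ (Set.range fun j : Fin k => momentDeriv N (j : ℕ) s)

/-- A complex subspace of `ℂ^N` is real if it is stable under coordinatewise
complex conjugation. -/
def IsRealSubspace {N : ℕ} (H : Submodule ℂ (Fin N → ℂ)) : Prop :=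
  ∀ v ∈ H, (fun i => (starRingEnd ℂ) (v i)) ∈ H

open Polynomial

noncomputable def Pmap (N : ℕ) : (Fin N → ℂ) →ₗ[ℂ] Polynomial ℂ where
  toFun v := ∑ i : Fin N,
    C (v i * ((-1) ^ (N - 1 - (i : ℕ)) * ((N - 1).choose i : ℂ))) * X ^ (N - 1 - (i : ℕ))
  map_add' x y := by
    simp only [Pi.add_apply, add_mul, map_add, ← Finset.sum_add_distrib]
  map_smul' r x := by
    simp only [Pi.smul_apply, smul_eq_mul, RingHom.id_apply, Finset.smul_sum, smul_eq_C_mul,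
      ← mul_assoc, ← C_mul]

lemma Pmap_coeff {N : ℕ} (v : Fin N → ℂ) (i : Fin N) :
    (Pmap N v).coeff (N - 1 - (i : ℕ)) =
      v i * ((-1) ^ (N - 1 - (i : ℕ)) * ((N - 1).choose i : ℂ)) := by
  have hinj : ∀ j : Fin N, N - 1 - (j : ℕ) = N - 1 - (i : ℕ) → j = i := by
    intro j h
    have hj := j.isLt; have hi := i.isLt
    exact Fin.ext (by omega)
  show (∑ j : Fin N, C (v j * _) * X ^ (N - 1 - (j : ℕ))).coeff _ = _
  rw [finset_sum_coeff]
  rw [Finset.sum_eq_single i]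
  · rw [coeff_C_mul, coeff_X_pow, if_pos rfl, mul_one]
  · intro j _ hji
    simp only [coeff_C_mul, coeff_X_pow]
    rw [if_neg (fun h => hji (hinj j h.symm))]
    ring
  · simp

lemma Pmap_injective (N : ℕ) : Function.Injective (Pmap N) := by
  rw [injective_iff_map_eq_zero]
  intro v hv
  funext i
  have := Pmap_coeff v i
  rw [hv, coeff_zero] at this
  have hle : (i : ℕ) ≤ N - 1 := by have := i.isLt; omega
  have hchoose : ((N - 1).choose i : ℂ) ≠ 0 :=
    Nat.cast_ne_zero.mpr (Nat.choose_pos hle).ne'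
  have hs : ((-1 : ℂ)) ^ (N - 1 - (i : ℕ)) * ((N - 1).choose i : ℂ) ≠ 0 :=
    mul_ne_zero (pow_ne_zero _ (by norm_num)) hchoose
  rcases mul_eq_zero.mp this.symm with h | h
  · exact h
  · exact absurd h hs

lemma Pmap_natDegree_le {N : ℕ} (v : Fin N → ℂ) : (Pmap N v).natDegree ≤ N - 1 := by
  show (∑ i : Fin N, C (v i * _) * X ^ (N - 1 - (i : ℕ))).natDegree ≤ N - 1
  apply natDegree_sum_le_of_forall_le
  intro i _
  exact (natDegree_C_mul_X_pow_le _ _).trans (by omega)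

lemma Pmap_degree_lt {N : ℕ} (hN : 0 < N) (v : Fin N → ℂ) :
    (Pmap N v).degree < (N : WithBot ℕ) := by
  rcases eq_or_ne (Pmap N v) 0 with h | h
  · rw [h, degree_zero]; exact WithBot.bot_lt_coe _
  · rw [← natDegree_lt_iff_degree_lt h]
    have := Pmap_natDegree_le v
    omega

lemma pairing (N j : ℕ) (s : ℂ) (f : Polynomial ℂ) (hf : f.natDegree < N) :
    ∑ i : Fin N, momentDeriv N j s i * f.coeff i = (derivative^[j] f).eval s := by
  have hle : ∀ (k : ℕ) (g : Polynomial ℂ), (derivative^[k] g).natDegree ≤ g.natDegree := by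
    intro k
    induction k with
    | zero => simp
    | succ k ih =>
      intro g
      rw [Function.iterate_succ_apply']
      exact (natDegree_derivative_le _).trans (le_trans (Nat.sub_le _ 1) (ih g))
  have hd : (derivative^[j] f).natDegree < N := lt_of_le_of_lt (hle j f) hf
  set A : ℕ → ℂ := fun i => (Nat.descFactorial i j : ℂ) * s ^ (i - j) * f.coeff i with hA
  have hL : ∑ i : Fin N, momentDeriv N j s i * f.coeff i = ∑ i ∈ Finset.range N, A i := by
    rw [← Fin.sum_univ_eq_sum_range A N]
    rfl
  rw [hL, eval_eq_sum_range' hd]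
  have h2 : ∑ i ∈ Finset.range N, A i = ∑ i ∈ Finset.range (N + j), A i := by
    apply Finset.sum_subset (Finset.range_subset_range.mpr (by omega))
    intro i _ hi
    simp only [Finset.mem_range, not_lt] at hi
    have : f.coeff i = 0 := coeff_eq_zero_of_natDegree_lt (lt_of_lt_of_le hf hi)
    simp [hA, this]
  have h3 : ∑ i ∈ Finset.range (N + j), A i = ∑ i ∈ Finset.Ico j (N + j), A i := by
    rw [Finset.range_eq_Ico,
      ← Finset.sum_Ico_consecutive A (Nat.zero_le j) (by omega : j ≤ N + j)]
    have : ∑ i ∈ Finset.Ico 0 j, A i = 0 := by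
      apply Finset.sum_eq_zero
      intro i hi
      simp only [Finset.mem_Ico] at hi
      rw [hA]
      simp [Nat.descFactorial_eq_zero_iff_lt.mpr hi.2]
    rw [this, zero_add]
  rw [h2, h3, Finset.sum_Ico_eq_sum_range]
  have : N + j - j = N := by omega
  rw [this]
  apply Finset.sum_congr rfl
  intro i _
  rw [hA]
  simp only [coeff_iterate_derivative, nsmul_eq_mul]
  rw [Nat.add_comm j i, Nat.add_sub_cancel]
  ring

lemma iterate_derivative_finset_sum {ι : Type*} (t : Finset ι) (g : ι → Polynomial ℂ) (c : ℕ) :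
    derivative^[c] (∑ i ∈ t, g i) = ∑ i ∈ t, derivative^[c] (g i) := by
  simp only [← Module.End.pow_apply]
  exact map_sum _ _ _

lemma natid {M i c : ℕ} (hic : i + c ≤ M) :
    M.choose i * (M - i).descFactorial c = M.descFactorial c * (M - c).choose i := by
  rw [Nat.descFactorial_eq_factorial_mul_choose, Nat.descFactorial_eq_factorial_mul_choose]
  have h1 : M.choose (M - i) * (M - i).choose c = M.choose c * (M - c).choose (M - i - c) :=
    Nat.choose_mul (by omega)
  rw [Nat.choose_symm (by omega : i ≤ M)] at h1
  rw [show M - i - c = (M - c) - i by omega, Nat.choose_symm (by omega : i ≤ M - c)] at h1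
  calc M.choose i * (Nat.factorial c * (M - i).choose c)
      = Nat.factorial c * (M.choose i * (M - i).choose c) := by ring
    _ = Nat.factorial c * (M.choose c * (M - c).choose i) := by rw [h1]
    _ = Nat.factorial c * M.choose c * (M - c).choose i := by ring

lemma deriv_Pmap_eval (N c : ℕ) (v : Fin N → ℂ) (s : ℂ) :
    (derivative^[c] (Pmap N v)).eval s =
      ∑ i : Fin N, v i * ((-1) ^ (N - 1 - (i : ℕ)) * ((N - 1).choose i : ℂ) *
        (Nat.descFactorial (N - 1 - (i : ℕ)) c : ℂ) * s ^ (N - 1 - (i : ℕ) - c)) := by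
  have hit : ∀ (a : ℂ) (e : ℕ), derivative^[c] (C a * X ^ e) =
      C a * (C (Nat.descFactorial e c : ℂ) * X ^ (e - c)) := by
    intro a e
    rw [iterate_derivative_C_mul, iterate_derivative_X_pow_eq_C_mul]
  show (derivative^[c] (∑ i : Fin N,
      C (v i * ((-1) ^ (N - 1 - (i : ℕ)) * ((N - 1).choose i : ℂ))) * X ^ (N - 1 - (i : ℕ)))).eval s = _
  rw [iterate_derivative_finset_sum, eval_finset_sum]
  apply Finset.sum_congr rfl
  intro i _
  rw [hit]
  simp only [eval_mul, eval_C, eval_pow, eval_X]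
  ring

lemma key_zero (N j c : ℕ) (s : ℂ) (h : j + c + 2 ≤ N) :
    (derivative^[c] (Pmap N (momentDeriv N j s))).eval s = 0 := by
  have hB : ∑ i : Fin N, momentDeriv N j s i * ((X + C (-s)) ^ (N - 1 - c)).coeff i = 0 := by
    rw [pairing N j s _ (by
      have : ((X + C (-s)) ^ (N - 1 - c)).natDegree = (N - 1 - c) * 1 := by
        rw [(monic_X_add_C (-s)).natDegree_pow, natDegree_X_add_C]
      omega)]
    rw [iterate_derivative_X_add_pow, nsmul_eq_mul, eval_mul, eval_pow]
    simp only [eval_add, eval_X, eval_C, add_neg_cancel]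
    rw [zero_pow (by omega : N - 1 - c - j ≠ 0), mul_zero]
  rw [deriv_Pmap_eval]
  have : ∀ i : Fin N, momentDeriv N j s i * ((-1) ^ (N - 1 - (i : ℕ)) * ((N - 1).choose i : ℂ) *
        (Nat.descFactorial (N - 1 - (i : ℕ)) c : ℂ) * s ^ (N - 1 - (i : ℕ) - c)) =
      ((-1) ^ c * (Nat.descFactorial (N - 1) c : ℂ)) *
        (momentDeriv N j s i * ((X + C (-s)) ^ (N - 1 - c)).coeff i) := by
    intro i
    rw [coeff_X_add_C_pow]
    rcases le_or_gt ((i : ℕ) + c) (N - 1) with hic | hic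
    · have hnat : ((N-1).choose i : ℂ) * (Nat.descFactorial (N - 1 - (i : ℕ)) c : ℂ) =
          (Nat.descFactorial (N - 1) c : ℂ) * ((N - 1 - c).choose i : ℂ) := by
        exact_mod_cast congrArg (Nat.cast : ℕ → ℂ) (natid hic)
      rw [neg_pow, show N - 1 - c - (i : ℕ) = N - 1 - (i : ℕ) - c by omega]
      have hpow : ((-1 : ℂ)) ^ c * ((-1 : ℂ)) ^ (N - 1 - (i : ℕ) - c) = (-1) ^ (N - 1 - (i : ℕ)) := by
        rw [← pow_add]; congr 1; omega
      rw [← hpow]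
      linear_combination (momentDeriv N j s i * (-1 : ℂ) ^ c * (-1 : ℂ) ^ (N - 1 - (i : ℕ) - c) *
        s ^ (N - 1 - (i : ℕ) - c)) * hnat
    · have h1 : Nat.descFactorial (N - 1 - (i : ℕ)) c = 0 :=
        Nat.descFactorial_eq_zero_iff_lt.mpr (by omega)
      have h2 : (N - 1 - c).choose i = 0 := Nat.choose_eq_zero_of_lt (by omega)
      simp [h1, h2]
  rw [Finset.sum_congr rfl (fun i _ => this i), ← Finset.mul_sum, hB, mul_zero]

lemma osc_vanish (N k c : ℕ) (s : ℂ) (u : Fin N → ℂ) (hu : u ∈ oscPlane N k s)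
    (h : k + c + 1 ≤ N) :
    (derivative^[c] (Pmap N u)).eval s = 0 := by
  set L : (Fin N → ℂ) →ₗ[ℂ] ℂ :=
    (Polynomial.leval s).comp (((derivative : Polynomial ℂ →ₗ[ℂ] Polynomial ℂ) ^ c).comp (Pmap N))
    with hL
  have happ : ∀ w : Fin N → ℂ, L w = (derivative^[c] (Pmap N w)).eval s := by
    intro w
    simp [hL, Module.End.pow_apply]
  have hle : oscPlane N k s ≤ LinearMap.ker L := by
    rw [oscPlane, Submodule.span_le]
    rintro _ ⟨j, rfl⟩
    rw [SetLike.mem_coe, LinearMap.mem_ker, happ]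
    exact key_zero N (j : ℕ) c s (by have := j.isLt; omega)
  have := hle hu
  rw [LinearMap.mem_ker, happ] at this
  exact this

lemma exists_echelon (q : ℕ) :
    ∀ (V : Submodule ℂ (Polynomial ℂ)) (D : ℕ),
      (∀ v ∈ V, (v : Polynomial ℂ).degree < (D : WithBot ℕ)) →
      Module.finrank ℂ V = q →
      ∃ f : Fin q → Polynomial ℂ,
        (∀ r, f r ∈ V) ∧ (V ≤ Submodule.span ℂ (Set.range f)) ∧
        (∀ r, f r ≠ 0) ∧ StrictMono (fun r => (f r).natDegree) := by
  induction q with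
  | zero =>
    intro V D hD hrank
    haveI : FiniteDimensional ℂ (degreeLT ℂ D) :=
      (Polynomial.degreeLTEquiv ℂ D).symm.finiteDimensional
    have hVle : V ≤ degreeLT ℂ D := fun v hv => Polynomial.mem_degreeLT.mpr (hD v hv)
    haveI : FiniteDimensional ℂ V := Submodule.finiteDimensional_of_le hVle
    have hbot : V = ⊥ := Submodule.finrank_eq_zero.mp hrank
    refine ⟨fun r => r.elim0, fun r => r.elim0, ?_, fun r => r.elim0, fun a => a.elim0⟩
    rw [hbot]; exact bot_le
  | succ q ih =>
    intro V D hD hrank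
    haveI : FiniteDimensional ℂ (degreeLT ℂ D) :=
      (Polynomial.degreeLTEquiv ℂ D).symm.finiteDimensional
    have hVle : V ≤ degreeLT ℂ D := fun v hv => Polynomial.mem_degreeLT.mpr (hD v hv)
    haveI : FiniteDimensional ℂ V := Submodule.finiteDimensional_of_le hVle
    -- the set of degrees of nonzero elements of V
    set SS : Set ℕ := (fun v : Polynomial ℂ => v.natDegree) '' {v | v ∈ V ∧ v ≠ 0} with hSS
    have hVne : V ≠ ⊥ := by
      intro hb
      rw [hb, finrank_bot] at hrank
      omega
    obtain ⟨g0, hg0V, hg0ne⟩ := V.ne_bot_iff.mp hVne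
    have hSSne : SS.Nonempty := ⟨g0.natDegree, ⟨g0, ⟨hg0V, hg0ne⟩, rfl⟩⟩
    have hSSbdd : BddAbove SS := by
      refine ⟨D, fun d hd => ?_⟩
      obtain ⟨v, ⟨hvV, hvne⟩, rfl⟩ := hd
      exact le_of_lt ((natDegree_lt_iff_degree_lt hvne).mpr (hD v hvV))
    set dm := sSup SS with hdm
    obtain ⟨g, ⟨hgV, hgne⟩, hgdeg⟩ := Nat.sSup_mem hSSne hSSbdd
    have hgdm : g.natDegree = dm := by rw [hdm]; exact hgdeg
    have hmax : ∀ v ∈ V, v ≠ 0 → v.natDegree ≤ dm :=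
      fun v hv hvne => le_csSup hSSbdd ⟨v, ⟨hv, hvne⟩, rfl⟩
    have hglc : g.coeff dm ≠ 0 := by
      rw [← hgdm]; exact leadingCoeff_ne_zero.mpr hgne
    -- the kernel of the top-coefficient functional
    set lam : V →ₗ[ℂ] ℂ := (lcoeff ℂ dm).comp V.subtype with hlam
    have hlamg : lam ⟨g, hgV⟩ = g.coeff dm := rfl
    have hrange : LinearMap.range lam = ⊤ := by
      rw [LinearMap.range_eq_top]
      intro x
      refine ⟨(x / g.coeff dm) • ⟨g, hgV⟩, ?_⟩
      rw [map_smul, hlamg, smul_eq_mul, div_mul_cancel₀ _ hglc]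
    have hker : Module.finrank ℂ (LinearMap.ker lam) = q := by
      have := LinearMap.finrank_range_add_finrank_ker lam
      rw [hrange, finrank_top, hrank] at this
      simp only [Module.finrank_self] at this
      omega
    set V' : Submodule ℂ (Polynomial ℂ) := (LinearMap.ker lam).map V.subtype with hV'
    have hV'le : V' ≤ V := Submodule.map_subtype_le V _
    have hV'rank : Module.finrank ℂ V' = q := by
      rw [hV', Submodule.finrank_map_subtype_eq]
      exact hker
    have hD' : ∀ v ∈ V', (v : Polynomial ℂ).degree < (dm : WithBot ℕ) := by
      intro v hv
      obtain ⟨⟨w, hwV⟩, hwker, rfl⟩ := hv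
      show (w : Polynomial ℂ).degree < (dm : WithBot ℕ)
      rcases eq_or_ne w 0 with h0 | h0
      · rw [h0, degree_zero]; exact WithBot.bot_lt_coe _
      · have h1 : w.natDegree ≤ dm := hmax w hwV h0
        have h2 : w.coeff dm = 0 := by
          have hk : (⟨w, hwV⟩ : V) ∈ LinearMap.ker lam := hwker
          simpa [hlam, lcoeff_apply, LinearMap.mem_ker] using hk
        have h3 : w.natDegree ≠ dm := by
          intro heq
          apply leadingCoeff_ne_zero.mpr h0
          rw [leadingCoeff, heq, h2]
        exact (natDegree_lt_iff_degree_lt h0).mp (by omega)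
    obtain ⟨f', hf'mem, hf'span, hf'ne, hf'mono⟩ := ih V' dm hD' hV'rank
    have hf'deg : ∀ i : Fin q, (f' i).natDegree < dm := by
      intro i
      have := hD' (f' i) (hf'mem i)
      exact (natDegree_lt_iff_degree_lt (hf'ne i)).mpr this
    refine ⟨Fin.snoc f' g, ?_, ?_, ?_, ?_⟩
    · intro r
      refine Fin.lastCases ?_ ?_ r
      · rw [Fin.snoc_last]; exact hgV
      · intro i; rw [Fin.snoc_castSucc]; exact hV'le (hf'mem i)
    · intro v hv
      have hwV : v - (v.coeff dm / g.coeff dm) • g ∈ V :=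
        V.sub_mem hv (V.smul_mem _ hgV)
      have hwker : (⟨v - (v.coeff dm / g.coeff dm) • g, hwV⟩ : V) ∈ LinearMap.ker lam := by
        rw [LinearMap.mem_ker]
        show (v - (v.coeff dm / g.coeff dm) • g).coeff dm = 0
        rw [coeff_sub, coeff_smul, smul_eq_mul, div_mul_cancel₀ _ hglc, sub_self]
      have hwV' : v - (v.coeff dm / g.coeff dm) • g ∈ V' := ⟨_, hwker, rfl⟩
      have hrangesub : Set.range f' ⊆ Set.range (Fin.snoc f' g : Fin (q+1) → Polynomial ℂ) := by
        rintro _ ⟨i, rfl⟩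
        exact ⟨Fin.castSucc i, Fin.snoc_castSucc _ _ _⟩
      have h1 : v - (v.coeff dm / g.coeff dm) • g ∈
          Submodule.span ℂ (Set.range (Fin.snoc f' g : Fin (q+1) → Polynomial ℂ)) :=
        Submodule.span_mono hrangesub (hf'span hwV')
      have h2 : g ∈ Submodule.span ℂ (Set.range (Fin.snoc f' g : Fin (q+1) → Polynomial ℂ)) :=
        Submodule.subset_span ⟨Fin.last q, Fin.snoc_last _ _⟩
      have := Submodule.add_mem _ h1 (Submodule.smul_mem _ (v.coeff dm / g.coeff dm) h2)
      simpa using this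
    · intro r
      refine Fin.lastCases ?_ ?_ r
      · rw [Fin.snoc_last]; exact hgne
      · intro i; rw [Fin.snoc_castSucc]; exact hf'ne i
    · rw [Fin.strictMono_iff_lt_succ]
      intro i
      simp only [Fin.snoc_castSucc]
      rcases eq_or_ne ((i : ℕ) + 1) q with hiq | hiq
      · have hsucc : (i.succ : Fin (q+1)) = Fin.last q := Fin.ext (by simp [hiq])
        rw [hsucc, Fin.snoc_last, hgdm]
        exact hf'deg i
      · have hlt : (i : ℕ) + 1 < q := lt_of_le_of_ne (Nat.succ_le_of_lt i.isLt) hiq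
        have : (i.succ : Fin (q+1)) = Fin.castSucc ⟨(i : ℕ) + 1, hlt⟩ := by
          apply Fin.ext; simp
        rw [this, Fin.snoc_castSucc]
        exact hf'mono (show i < ⟨(i : ℕ) + 1, hlt⟩ by simp [Fin.lt_def])

lemma iterate_natDegree_le (c : ℕ) (g : Polynomial ℂ) :
    (derivative^[c] g).natDegree ≤ g.natDegree - c := by
  induction c generalizing g with
  | zero => simp
  | succ c ih =>
    rw [Function.iterate_succ_apply']
    have h1 := natDegree_derivative_le (derivative^[c] g)
    have h2 := ih g
    omega

noncomputable def wronskMat (P : ℕ) (f : Fin P → Polynomial ℂ) :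
    Matrix (Fin P) (Fin P) (Polynomial ℂ) :=
  Matrix.of fun r c => derivative^[(c : ℕ)] (f r)

lemma coeff_prod_of_le {ι : Type*} (t : Finset ι) (g : ι → Polynomial ℂ) (n : ι → ℕ)
    (h : ∀ i ∈ t, (g i).natDegree ≤ n i) :
    (∏ i ∈ t, g i).coeff (∑ i ∈ t, n i) = ∏ i ∈ t, (g i).coeff (n i) := by
  induction t using Finset.cons_induction with
  | empty => simp
  | cons a t ha ih =>
    rw [Finset.prod_cons, Finset.sum_cons,
      coeff_mul_add_eq_of_natDegree_le (h a (Finset.mem_cons_self a t))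
        ((natDegree_prod_le _ _).trans
          (Finset.sum_le_sum fun i hi => h i (Finset.mem_cons_of_mem hi))),
      ih fun i hi => h i (Finset.mem_cons_of_mem hi), Finset.prod_cons]

lemma fin_le_of_strictMono {P : ℕ} (d : Fin P → ℕ) (h : StrictMono d) :
    ∀ r : Fin P, (r : ℕ) ≤ d r := by
  have key : ∀ k : ℕ, ∀ r : Fin P, (r : ℕ) = k → k ≤ d r := by
    intro k
    induction k with
    | zero => intro r _; exact Nat.zero_le _
    | succ k ihk =>
      intro r hr
      have hk : k < P := by omega
      have h1 : k ≤ d ⟨k, hk⟩ := ihk ⟨k, hk⟩ rfl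
      have h2 : d ⟨k, hk⟩ < d r := h (by simp [Fin.lt_def]; omega)
      omega
  exact fun r => key (r : ℕ) r rfl

lemma wronsk_natDegree_le (P m : ℕ) (f : Fin P → Polynomial ℂ)
    (hdeg : ∀ r : Fin P, (f r).natDegree ≤ m + r) :
    (wronskMat P f).det.natDegree ≤ P * m := by
  rw [Matrix.det_apply']
  apply natDegree_sum_le_of_forall_le
  intro σ _
  apply natDegree_mul_le.trans
  rw [natDegree_intCast]
  simp only [zero_add, wronskMat, Matrix.of_apply]
  by_cases hval : ∀ i : Fin P, (i : ℕ) ≤ (f (σ i)).natDegree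
  · apply (natDegree_prod_le _ _).trans
    have hterm : ∀ i : Fin P,
        (derivative^[(i : ℕ)] (f (σ i))).natDegree ≤ (f (σ i)).natDegree - (i : ℕ) :=
      fun i => iterate_natDegree_le _ _
    apply (Finset.sum_le_sum fun i _ => hterm i).trans
    have hsplit : ∑ i : Fin P, ((f (σ i)).natDegree - (i : ℕ)) + ∑ i : Fin P, (i : ℕ) =
        ∑ i : Fin P, (f (σ i)).natDegree := by
      rw [← Finset.sum_add_distrib]
      exact Finset.sum_congr rfl fun i _ => by have := hval i; omega
    have hperm : ∑ i : Fin P, (f (σ i)).natDegree = ∑ i : Fin P, (f i).natDegree :=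
      Equiv.sum_comp σ fun i => (f i).natDegree
    have hbound : ∑ i : Fin P, (f i).natDegree ≤ P * m + ∑ i : Fin P, (i : ℕ) := by
      calc ∑ i : Fin P, (f i).natDegree ≤ ∑ i : Fin P, (m + (i : ℕ)) :=
            Finset.sum_le_sum fun i _ => hdeg i
        _ = P * m + ∑ i : Fin P, (i : ℕ) := by
            rw [Finset.sum_add_distrib, Finset.sum_const, Finset.card_univ, Fintype.card_fin,
              smul_eq_mul]
    omega
  · push_neg at hval
    obtain ⟨i, hi⟩ := hval
    have h0 : derivative^[(i : ℕ)] (f (σ i)) = 0 := iterate_derivative_eq_zero hi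
    rw [Finset.prod_eq_zero (Finset.mem_univ i) h0]
    simp

lemma wronsk_det_ne_zero (P : ℕ) (f : Fin P → Polynomial ℂ) (hne : ∀ r, f r ≠ 0)
    (hmono : StrictMono fun r => (f r).natDegree) :
    (wronskMat P f).det ≠ 0 := by
  set d : Fin P → ℕ := fun r => (f r).natDegree with hd
  have hvalid : ∀ r : Fin P, (r : ℕ) ≤ d r := fin_le_of_strictMono d hmono
  set Dtot : ℕ := ∑ r : Fin P, (d r - (r : ℕ)) with hDtot
  -- the numeric matrix of leading data
  set B : Matrix (Fin P) (Fin P) ℂ :=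
    Matrix.of fun r c : Fin P => (f r).leadingCoeff * (Nat.descFactorial (d r) (c : ℕ) : ℂ)
    with hB
  have hcoeff : (wronskMat P f).det.coeff Dtot = B.det := by
    rw [Matrix.det_apply', Matrix.det_apply', finset_sum_coeff]
    simp only [wronskMat, Matrix.of_apply]
    apply Finset.sum_congr rfl
    intro σ _
    have hcast : ∀ g : Polynomial ℂ,
        (((Equiv.Perm.sign σ : ℤ) : Polynomial ℂ) * g).coeff Dtot =
          ((Equiv.Perm.sign σ : ℤ) : ℂ) * g.coeff Dtot := by
      intro g
      rcases Int.units_eq_one_or (Equiv.Perm.sign σ) with h | h <;> simp [h]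
    rw [hcast]
    congr 1
    by_cases hval : ∀ i : Fin P, (i : ℕ) ≤ d (σ i)
    · have hsum : ∑ i : Fin P, (d (σ i) - (i : ℕ)) = Dtot := by
        have e1 : ∑ i : Fin P, (d (σ i) - (i : ℕ)) + ∑ i : Fin P, (i : ℕ) =
            ∑ i : Fin P, d (σ i) := by
          rw [← Finset.sum_add_distrib]
          exact Finset.sum_congr rfl fun i _ => by have := hval i; omega
        have e2 : Dtot + ∑ i : Fin P, (i : ℕ) = ∑ i : Fin P, d i := by
          rw [hDtot, ← Finset.sum_add_distrib]
          exact Finset.sum_congr rfl fun i _ => by have := hvalid i; omega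
        have e3 : ∑ i : Fin P, d (σ i) = ∑ i : Fin P, d i := Equiv.sum_comp σ d
        omega
      rw [← hsum, coeff_prod_of_le Finset.univ (fun i : Fin P => derivative^[(i : ℕ)] (f (σ i)))
        (fun i : Fin P => d (σ i) - (i : ℕ)) (fun i _ => iterate_natDegree_le _ _)]
      apply Finset.prod_congr rfl
      intro i _
      show (derivative^[(i : ℕ)] (f (σ i))).coeff (d (σ i) - (i : ℕ)) = _
      rw [coeff_iterate_derivative]
      rw [show d (σ i) - (i : ℕ) + (i : ℕ) = d (σ i) by have := hval i; omega]
      rw [nsmul_eq_mul, hB]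
      show (Nat.descFactorial (d (σ i)) (i : ℕ) : ℂ) * (f (σ i)).coeff (d (σ i)) =
        (f (σ i)).leadingCoeff * (Nat.descFactorial (d (σ i)) (i : ℕ) : ℂ)
      rw [← leadingCoeff]
      ring
    · push_neg at hval
      obtain ⟨i, hi⟩ := hval
      have h0 : derivative^[(i : ℕ)] (f (σ i)) = 0 := iterate_derivative_eq_zero hi
      rw [Finset.prod_eq_zero (Finset.mem_univ i) h0, coeff_zero]
      have h0' : B (σ i) i = 0 := by
        rw [hB]
        show (f (σ i)).leadingCoeff * (Nat.descFactorial (d (σ i)) (i : ℕ) : ℂ) = 0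
        rw [Nat.descFactorial_eq_zero_iff_lt.mpr hi, Nat.cast_zero, mul_zero]
      exact (Finset.prod_eq_zero (f := fun j : Fin P => B (σ j) j)
        (Finset.mem_univ i) h0').symm
  -- B = diagonal(lc) * descFactorial matrix
  have hBdet : B.det ≠ 0 := by
    have hfactor : B = Matrix.diagonal (fun r => (f r).leadingCoeff) *
        Matrix.of (fun r c : Fin P => ((descPochhammer ℂ (c : ℕ)).eval ((d r : ℂ)))) := by
      ext r c
      rw [Matrix.mul_apply]
      rw [Finset.sum_eq_single r]
      · rw [Matrix.diagonal_apply_eq]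
        simp only [Matrix.of_apply, descPochhammer_eval_eq_descFactorial]
        rfl
      · intro b _ hbr
        rw [Matrix.diagonal_apply_ne' _ hbr, zero_mul]
      · simp
    rw [hfactor, Matrix.det_mul, Matrix.det_diagonal]
    apply mul_ne_zero
    · exact Finset.prod_ne_zero_iff.mpr fun r _ => leadingCoeff_ne_zero.mpr (hne r)
    · rw [← Matrix.det_eval_matrixOfPolynomials_eq_det_vandermonde
        (fun r => (d r : ℂ)) (fun c => descPochhammer ℂ (c : ℕ))
        (fun c => descPochhammer_natDegree (R := ℂ) (c : ℕ))
        (fun c => monic_descPochhammer (R := ℂ) (c : ℕ))]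
      apply Matrix.det_vandermonde_ne_zero_iff.mpr
      intro r r' hrr'
      have : d r = d r' := Nat.cast_injective hrr'
      exact hmono.injective this
  intro hdet0
  rw [hdet0, coeff_zero] at hcoeff
  exact hBdet hcoeff.symm

/-- If all iterated derivatives up to order `e - 1` of `Q` vanish at `s`, then
`(X - C s) ^ e` divides `Q`. -/
lemma pow_X_sub_C_dvd_of_iterate_derivative (Q : Polynomial ℂ) (s : ℂ) (e : ℕ)
    (h : ∀ c < e, (derivative^[c] Q).eval s = 0) :
    (X - C s) ^ e ∣ Q := by
  rcases eq_or_ne Q 0 with h0 | h0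
  · simp [h0]
  rcases Nat.eq_zero_or_pos e with he | he
  · simp [he]
  have hlt : e - 1 < Q.rootMultiplicity s := by
    apply Polynomial.lt_rootMultiplicity_of_isRoot_iterate_derivative_of_mem_nonZeroDivisors h0
    · intro mm hmm
      exact h mm (by omega)
    · exact mem_nonZeroDivisors_of_ne_zero
        (Nat.cast_ne_zero.mpr (Nat.factorial_pos (e-1)).ne')
  calc (X - C s) ^ e ∣ (X - C s) ^ Q.rootMultiplicity s := pow_dvd_pow _ (by omega)
    _ ∣ Q := Q.pow_rootMultiplicity_dvd s

lemma wronsk_dvd (P : ℕ) (f : Fin P → Polynomial ℂ) (Q : Polynomial ℂ) (s : ℂ) (a : ℕ)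
    (co : Fin P → ℂ) (r0 : Fin P) (hr0 : co r0 ≠ 0) (hQ : ∑ r, co r • f r = Q)
    (hdvd : (X - C s) ^ (a + P - 1) ∣ Q) :
    (X - C s) ^ a ∣ (wronskMat P f).det := by
  have hrow : ∀ c : Fin P, (X - C s) ^ a ∣ derivative^[(c : ℕ)] Q := by
    intro c
    refine dvd_trans (pow_dvd_pow _ ?_) (pow_sub_dvd_iterate_derivative_of_pow_dvd (c : ℕ) hdvd)
    have := c.isLt
    omega
  have hex : ∀ c : Fin P, ∃ g, derivative^[(c : ℕ)] Q = (X - C s) ^ a * g := fun c => (hrow c)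
  choose w hw using hex
  have hcomb : (fun c : Fin P => derivative^[(c : ℕ)] Q) =
      ∑ r, Polynomial.C (co r) • (wronskMat P f) r := by
    funext c
    rw [← hQ, iterate_derivative_finset_sum]
    rw [Finset.sum_apply]
    apply Finset.sum_congr rfl
    intro r _
    rw [iterate_derivative_smul]
    rw [Pi.smul_apply]
    show co r • derivative^[(c : ℕ)] (f r) = Polynomial.C (co r) • derivative^[(c : ℕ)] (f r)
    rw [smul_eq_C_mul, smul_eq_mul]
  have h1 : ((wronskMat P f).updateRow r0 (fun c => derivative^[(c : ℕ)] Q)).det =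
      Polynomial.C (co r0) * (wronskMat P f).det := by
    rw [hcomb, Matrix.det_updateRow_sum, smul_eq_mul]
  have h2 : (X - C s) ^ a ∣ Polynomial.C (co r0) * (wronskMat P f).det := by
    rw [← h1]
    have hupd : ((wronskMat P f).updateRow r0 (fun c => derivative^[(c : ℕ)] Q)) =
        ((wronskMat P f).updateRow r0 ((X - C s) ^ a • w)) := by
      have hfun : (fun c : Fin P => derivative^[(c : ℕ)] Q) = (X - C s) ^ a • w := by
        funext c
        rw [Pi.smul_apply, smul_eq_mul, ← hw c]
      rw [hfun]
    rw [hupd, Matrix.det_updateRow_smul]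
    exact Dvd.intro _ rfl
  have h3 : (wronskMat P f).det =
      Polynomial.C (co r0)⁻¹ * (Polynomial.C (co r0) * (wronskMat P f).det) := by
    rw [← mul_assoc, ← C_mul, inv_mul_cancel₀ hr0, C_1, one_mul]
  rw [h3]
  exact h2.mul_left _

lemma strictMono_shift_le {P : ℕ} (d : Fin P → ℕ) (h : StrictMono d) :
    ∀ r r' : Fin P, (r : ℕ) ≤ (r' : ℕ) → d r + ((r' : ℕ) - (r : ℕ)) ≤ d r' := by
  have key : ∀ k : ℕ, ∀ r r' : Fin P, (r' : ℕ) = (r : ℕ) + k → d r + k ≤ d r' := by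
    intro k
    induction k with
    | zero =>
      intro r r' hr
      have : r = r' := Fin.ext (by omega)
      rw [this]
      omega
    | succ k ihk =>
      intro r r' hr
      have hlt : (r : ℕ) + k < P := by have := r'.isLt; omega
      have h1 : d r + k ≤ d ⟨(r : ℕ) + k, hlt⟩ := ihk r _ rfl
      have h2 : d ⟨(r : ℕ) + k, hlt⟩ < d r' := h (by simp [Fin.lt_def]; omega)
      omega
  intro r r' hrr'
  exact key ((r' : ℕ) - (r : ℕ)) r r' (by omega)

/-- **Eisenbud–Harris properness (empty case).** For positive integers `m, p`,
positive integers `a_1, …, a_n` with `a_1 + ⋯ + a_n > m·p`, and pairwise distinct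
complex numbers `s_1, …, s_n`, no `p`-dimensional complex subspace `H ⊆ ℂ^{m+p}`
satisfies `dim_ℂ(H ∩ K_{m+1-a_i}(s_i)) ≥ 1` for every `i`. -/
theorem osculating_intersection_empty
    (m p : ℕ) (hm : 0 < m) (hp : 0 < p) (n : ℕ)
    (a : Fin n → ℕ) (ha : ∀ i, 0 < a i) (hsum : m * p < ∑ i, a i)
    (s : Fin n → ℂ) (hs : Function.Injective s) :
    ¬ ∃ H : Submodule ℂ (Fin (m + p) → ℂ),
        Module.finrank ℂ H = p ∧
        ∀ i, 1 ≤ Module.finrank ℂ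
          ↥(H ⊓ oscPlane (m + p) (m + 1 - a i) (s i)) := by
  rintro ⟨H, hHrank, hint⟩
  -- every `a i` is at most `m`
  have ham : ∀ i, a i ≤ m := by
    intro i
    by_contra hai
    push_neg at hai
    have h0 : m + 1 - a i = 0 := by omega
    have h1 := hint i
    rw [h0] at h1
    have h2 : oscPlane (m + p) 0 (s i) = ⊥ := by
      rw [oscPlane, Set.range_eq_empty, Submodule.span_empty]
    rw [h2, inf_bot_eq, finrank_bot] at h1
    omega
  -- pick a nonzero vector in each intersection
  have hex : ∀ i, ∃ u : Fin (m + p) → ℂ,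
      u ∈ H ⊓ oscPlane (m + p) (m + 1 - a i) (s i) ∧ u ≠ 0 := by
    intro i
    have h1 := hint i
    have h2 : 0 < Module.finrank ℂ ↥(H ⊓ oscPlane (m + p) (m + 1 - a i) (s i)) := by omega
    have h3 : Nontrivial ↥(H ⊓ oscPlane (m + p) (m + 1 - a i) (s i)) :=
      Module.finrank_pos_iff.mp h2
    obtain ⟨x, hx⟩ := exists_ne (0 : ↥(H ⊓ oscPlane (m + p) (m + 1 - a i) (s i)))
    exact ⟨(x : Fin (m + p) → ℂ), x.2, fun h => hx (Subtype.ext h)⟩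
  choose u hu hu0 using hex
  -- the image space of polynomials
  set V : Submodule ℂ (Polynomial ℂ) := Submodule.map (Pmap (m + p)) H with hV
  have hVrank : Module.finrank ℂ V = p := by
    rw [hV]
    exact ((Submodule.equivMapOfInjective (Pmap (m + p)) (Pmap_injective (m + p))
      H).symm.finrank_eq).trans hHrank
  have hdegV : ∀ v ∈ V, (v : Polynomial ℂ).degree < ((m + p) : WithBot ℕ) := by
    rintro v ⟨w, _, rfl⟩
    exact Pmap_degree_lt (by omega) w
  -- echelon basis
  obtain ⟨f, hfmem, hfspan, hfne, hfmono⟩ := exists_echelon p V (m + p) hdegV hVrank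
  have hfdN : ∀ r : Fin p, (f r).natDegree < (m + p) := fun r =>
    (natDegree_lt_iff_degree_lt (hfne r)).mpr (hdegV _ (hfmem r))
  have hfd : ∀ r : Fin p, (f r).natDegree ≤ m + (r : ℕ) := by
    intro r
    have hlast : (r : ℕ) ≤ ((Fin.last (p - 1)) : ℕ) := by
      have := r.isLt
      simp [Fin.last]
      omega
    have hplast : p - 1 < p := by omega
    have h1 := strictMono_shift_le (fun r => (f r).natDegree) hfmono r ⟨p - 1, hplast⟩
      (by have := r.isLt; simp; omega)
    have h2 := hfdN ⟨p - 1, hplast⟩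
    have := r.isLt
    simp only at h1
    omega
  -- the Wronskian
  set W : Polynomial ℂ := (wronskMat p f).det with hW
  have hWne : W ≠ 0 := wronsk_det_ne_zero p f hfne hfmono
  have hWdeg : W.natDegree ≤ p * m := wronsk_natDegree_le p m f hfd
  -- each factor divides the Wronskian
  have hdvd : ∀ i, (X - C (s i)) ^ (a i) ∣ W := by
    intro i
    set Q : Polynomial ℂ := Pmap (m + p) (u i) with hQ
    have hQV : Q ∈ V := ⟨u i, (hu i).1, rfl⟩
    have hQne : Q ≠ 0 := by
      intro h
      apply hu0 i
      apply Pmap_injective (m + p)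
      rw [map_zero, ← hQ]
      exact h
    have hvanish : ∀ c < a i + p - 1, (derivative^[c] Q).eval (s i) = 0 := by
      intro c hc
      apply osc_vanish (m + p) (m + 1 - a i) c (s i) (u i) (Submodule.mem_inf.mp (hu i)).2
      have h1 := ham i
      have h2 := ha i
      omega
    have hpowdvd : (X - C (s i)) ^ (a i + p - 1) ∣ Q :=
      pow_X_sub_C_dvd_of_iterate_derivative Q (s i) _ hvanish
    obtain ⟨co, hco⟩ := Submodule.mem_span_range_iff_exists_fun ℂ |>.mp (hfspan hQV)
    have hr0 : ∃ r0, co r0 ≠ 0 := by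
      by_contra hall
      push_neg at hall
      apply hQne
      rw [← hco]
      exact Finset.sum_eq_zero fun r _ => by rw [hall r, zero_smul]
    obtain ⟨r0, hr0⟩ := hr0
    exact wronsk_dvd p f Q (s i) (a i) co r0 hr0 hco hpowdvd
  -- the product of all factors divides the Wronskian
  have hcop : Pairwise (Function.onFun IsCoprime fun i => (X - C (s i)) ^ (a i)) := by
    intro i j hij
    exact (Polynomial.pairwise_coprime_X_sub_C hs hij).pow
  have hproddvd : (∏ i, (X - C (s i)) ^ (a i)) ∣ W :=
    Fintype.prod_dvd_of_coprime hcop fun i => hdvd i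
  have hprodne : ∀ i ∈ Finset.univ, ((X - C (s i)) ^ (a i) : Polynomial ℂ) ≠ 0 :=
    fun i _ => pow_ne_zero _ (X_sub_C_ne_zero (s i))
  have hproddeg : (∏ i, (X - C (s i)) ^ (a i)).natDegree = ∑ i, a i := by
    rw [natDegree_prod _ _ hprodne]
    apply Finset.sum_congr rfl
    intro i _
    rw [natDegree_pow, natDegree_X_sub_C, mul_one]
  have hfinal := Polynomial.natDegree_le_of_dvd hproddvd hWne
  rw [hproddeg] at hfinal
  have : m * p = p * m := Nat.mul_comm m p
  omega
end

section
/- Let m, p be positive integers, let w and v be partitions and a a positive integer with |w| + |v| + a = mp, and let s be a nonzero real number. Then the set of p-dimensional complex subspaces H ⊆ ℂ^{m+p} lying in σ_w(F_•(0)) ∩ σ_v(F_•(∞)) and satisfying dim_ℂ(H ∩ K_{m+1−a}(s)) ≥ 1 has at most one element, and if such a subspace H exists it is real (stable under coordinatewise complex conjugation). -/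
/-- A partition `m ≥ w_1 ≥ ⋯ ≥ w_p ≥ 0`, recorded as an antitone function
`Fin p → ℕ` bounded by `m`. -/
def IsPartition (m p : ℕ) (w : Fin p → ℕ) : Prop :=
  (∀ i, w i ≤ m) ∧ Antitone w

/-- Membership of a `p`-plane `H` in the Schubert cycle `σ_w(F_•)`, where the flag is
given by a function `F : ℕ → Submodule ℂ (Fin (m+p) → ℂ)` assigning to `k` the
`k`-dimensional member `F_k` of the flag: the conditions
`dim_ℂ(H ∩ F_{m+i-w_i}) ≥ i` for `i = 1, …, p`. -/
def InSchubert (m p : ℕ) (w : Fin p → ℕ)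
    (F : ℕ → Submodule ℂ (Fin (m + p) → ℂ))
    (H : Submodule ℂ (Fin (m + p) → ℂ)) : Prop :=
  ∀ i : Fin p, (i : ℕ) + 1 ≤ Module.finrank ℂ ↥(H ⊓ F (m + ((i : ℕ) + 1) - w i))

/-- The `k`-dimensional coordinate subspace `span(e_1, …, e_k)` of `ℂ^N`:
the member `F_k(0) = K_k(0)` of the flag osculating the rational normal curve at `0`. -/
noncomputable def coordPlaneLow (N k : ℕ) : Submodule ℂ (Fin N → ℂ) :=
  Submodule.span ℂ
    (Set.range fun j : Fin k => fun i : Fin N => if (i : ℕ) = (j : ℕ) then (1 : ℂ) else 0)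

/-- The `k`-dimensional coordinate subspace `span(e_N, e_{N-1}, …, e_{N-k+1})` of `ℂ^N`:
the member `F_k(∞)` of the flag osculating the rational normal curve at `∞`. -/
noncomputable def coordPlaneHigh (N k : ℕ) : Submodule ℂ (Fin N → ℂ) :=
  Submodule.span ℂ
    (Set.range fun j : Fin k =>
      fun i : Fin N => if (i : ℕ) = N - 1 - (j : ℕ) then (1 : ℂ) else 0)

open Finset Polynomial Module

section PieriAux

/-- Vectors supported on coordinates `< k`. -/
noncomputable def suppLow (N k : ℕ) : Submodule ℂ (Fin N → ℂ) where
  carrier := {x | ∀ i : Fin N, k ≤ (i : ℕ) → x i = 0}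
  add_mem' := by intro x y hx hy i hi; simp [hx i hi, hy i hi]
  zero_mem' := by intro i _; rfl
  smul_mem' := by intro c x hx i hi; simp [hx i hi]

/-- Vectors supported on coordinates `≥ k`. -/
noncomputable def suppHigh (N k : ℕ) : Submodule ℂ (Fin N → ℂ) where
  carrier := {x | ∀ i : Fin N, (i : ℕ) < k → x i = 0}
  add_mem' := by intro x y hx hy i hi; simp [hx i hi, hy i hi]
  zero_mem' := by intro i _; rfl
  smul_mem' := by intro c x hx i hi; simp [hx i hi]

lemma mem_suppLow {N k : ℕ} {x : Fin N → ℂ} :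
    x ∈ suppLow N k ↔ ∀ i : Fin N, k ≤ (i : ℕ) → x i = 0 := Iff.rfl

lemma mem_suppHigh {N k : ℕ} {x : Fin N → ℂ} :
    x ∈ suppHigh N k ↔ ∀ i : Fin N, (i : ℕ) < k → x i = 0 := Iff.rfl

lemma coordPlaneLow_le_suppLow (N k : ℕ) : coordPlaneLow N k ≤ suppLow N k := by
  rw [coordPlaneLow, Submodule.span_le]
  rintro x ⟨j, rfl⟩
  intro i hi
  have hj := j.2
  simp only
  rw [if_neg (by omega)]

lemma coordPlaneHigh_le_suppHigh (N k : ℕ) : coordPlaneHigh N k ≤ suppHigh N (N - k) := by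
  rw [coordPlaneHigh, Submodule.span_le]
  rintro x ⟨j, rfl⟩
  intro i hi
  have hj := j.2
  simp only
  rw [if_neg (by omega)]

lemma disjoint_low_high {N k k' : ℕ} (hkk : k ≤ k') : suppLow N k ⊓ suppHigh N k' = ⊥ := by
  rw [eq_bot_iff]
  rintro x ⟨hx1, hx2⟩
  have hx0 : x = 0 := by
    funext i
    rcases lt_or_ge (i : ℕ) k' with h | h
    · exact hx2 i h
    · exact hx1 i (le_trans hkk h)
  simp [hx0]

lemma rank_add_rank_le (N : ℕ) (H A B : Submodule ℂ (Fin N → ℂ)) (k k' : ℕ) (hkk : k ≤ k')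
    (hA : A ≤ H) (hB : B ≤ H) (hAs : A ≤ suppLow N k) (hBs : B ≤ suppHigh N k') :
    finrank ℂ A + finrank ℂ B ≤ finrank ℂ H := by
  have hd : A ⊓ B = ⊥ := by
    rw [eq_bot_iff]
    exact le_trans (inf_le_inf hAs hBs) (disjoint_low_high hkk).le
  have h1 := Submodule.finrank_sup_add_finrank_inf_eq A B
  rw [hd, finrank_bot, add_zero] at h1
  rw [← h1]
  exact Submodule.finrank_mono (sup_le hA hB)

lemma decomp_trunc (N : ℕ) (H A B : Submodule ℂ (Fin N → ℂ)) (k k' : ℕ) (hkk : k ≤ k')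
    (hA : A ≤ H) (hB : B ≤ H) (hAs : A ≤ suppLow N k) (hBs : B ≤ suppHigh N k')
    (hrank : finrank ℂ H ≤ finrank ℂ A + finrank ℂ B)
    (u : Fin N → ℂ) (hu : u ∈ H) :
    (∀ i : Fin N, k ≤ (i : ℕ) → (i : ℕ) < k' → u i = 0) ∧
      (fun i : Fin N => if (i : ℕ) < k then u i else 0) ∈ H := by
  have hd : A ⊓ B = ⊥ := by
    rw [eq_bot_iff]
    exact le_trans (inf_le_inf hAs hBs) (disjoint_low_high hkk).le
  have h1 := Submodule.finrank_sup_add_finrank_inf_eq A B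
  rw [hd, finrank_bot, add_zero] at h1
  have hsupEq : A ⊔ B = H :=
    Submodule.eq_of_le_of_finrank_le (sup_le hA hB) (by omega)
  have hu' : u ∈ A ⊔ B := by rw [hsupEq]; exact hu
  obtain ⟨x, hxA, y, hyB, hxy⟩ := Submodule.mem_sup.mp hu'
  constructor
  · intro i h1i h2i
    have hcf := congrFun hxy i
    have hxi : x i = 0 := hAs hxA i h1i
    have hyi : y i = 0 := hBs hyB i h2i
    simp only [Pi.add_apply, hxi, hyi, add_zero] at hcf
    exact hcf.symm
  · have hxeq : (fun i : Fin N => if (i : ℕ) < k then u i else 0) = x := by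
      funext i
      by_cases h : (i : ℕ) < k
      · rw [if_pos h]
        have hcf := congrFun hxy i
        have hyi : y i = 0 := hBs hyB i (lt_of_lt_of_le h hkk)
        simp only [Pi.add_apply, hyi, add_zero] at hcf
        exact hcf.symm
      · rw [if_neg h]
        exact (hAs hxA i (not_lt.mp h)).symm
    rw [hxeq]
    exact hA hxA

/-- evaluation map `q ↦ (q(i) sⁱ)ᵢ` -/
noncomputable def phiMap (N : ℕ) (s : ℂ) : Polynomial ℂ →ₗ[ℂ] (Fin N → ℂ) where
  toFun q := fun i => q.eval ((i : ℕ) : ℂ) * s ^ (i : ℕ)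
  map_add' q r := by funext i; simp [add_mul]
  map_smul' c q := by funext i; simp [mul_assoc]

lemma oscPlane_le_map (N k : ℕ) (s : ℂ) (hs : s ≠ 0) :
    oscPlane N k s ≤ Submodule.map (phiMap N s) (degreeLT ℂ k) := by
  rw [oscPlane, Submodule.span_le]
  rintro x ⟨j, rfl⟩
  refine ⟨C (s⁻¹ ^ (j : ℕ)) * descPochhammer ℂ (j : ℕ), ?_, ?_⟩
  · rw [SetLike.mem_coe, mem_degreeLT]
    have h1 : (C (s⁻¹ ^ (j : ℕ)) * descPochhammer ℂ (j : ℕ)).degree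
        = (descPochhammer ℂ (j : ℕ)).degree :=
      degree_C_mul (pow_ne_zero _ (inv_ne_zero hs))
    rw [h1, degree_eq_natDegree (monic_descPochhammer ℂ (j : ℕ)).ne_zero,
      descPochhammer_natDegree]
    exact_mod_cast j.2
  · funext i
    show (C (s⁻¹ ^ (j : ℕ)) * descPochhammer ℂ (j : ℕ)).eval ((i : ℕ) : ℂ) * s ^ (i : ℕ) = _
    rw [eval_mul, eval_C, descPochhammer_eval_eq_descFactorial]
    show _ = ((Nat.descFactorial (i : ℕ) (j : ℕ) : ℂ)) * s ^ ((i : ℕ) - (j : ℕ))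
    rcases le_or_gt (j : ℕ) (i : ℕ) with h | h
    · have hpow : s ^ (i : ℕ) = s ^ ((i : ℕ) - (j : ℕ)) * s ^ (j : ℕ) := by
        rw [← pow_add]; congr 1; omega
      rw [hpow, inv_pow]
      field_simp
    · rw [Nat.descFactorial_eq_zero_iff_lt.mpr h]
      simp

def bIdx (m : ℕ) {p : ℕ} (w : Fin p → ℕ) (t : Fin p) : ℕ := m + ((t : ℕ) + 1) - w t

def cIdx {p : ℕ} (v : Fin p → ℕ) (t : Fin p) : ℕ := (t : ℕ) + v t.rev

def unionI (m : ℕ) {p : ℕ} (w v : Fin p → ℕ) : Finset ℕ :=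
  Finset.univ.biUnion fun t : Fin p => Finset.Ico (cIdx v t) (bIdx m w t)

def zSet (m p : ℕ) (w v : Fin p → ℕ) : Finset ℕ := Finset.range (m + p) \ unionI m w v

noncomputable def rFun (m p : ℕ) (w v : Fin p → ℕ) (s : ℝ) (j : ℕ) : ℝ :=
  (∏ z ∈ zSet m p w v, ((j : ℝ) - (z : ℝ))) * s ^ j

noncomputable def gvec (m p : ℕ) (w v : Fin p → ℕ) (s : ℝ) : Fin p → Fin (m + p) → ℂ :=
  fun t i => if cIdx v t ≤ (i : ℕ) ∧ (i : ℕ) < bIdx m w t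
    then ((rFun m p w v s (i : ℕ) : ℝ) : ℂ) else 0

lemma isReal_span {N : ℕ} {ι : Type*} (g : ι → (Fin N → ℂ))
    (hg : ∀ t i, (starRingEnd ℂ) (g t i) = g t i) :
    IsRealSubspace (Submodule.span ℂ (Set.range g)) := by
  intro x hx
  induction hx using Submodule.span_induction with
  | mem x h =>
      obtain ⟨t, rfl⟩ := h
      have h1 : (fun i => (starRingEnd ℂ) (g t i)) = g t := funext (hg t)
      rw [h1]
      exact Submodule.subset_span ⟨t, rfl⟩
  | zero =>
      have h1 : (fun i : Fin N => (starRingEnd ℂ) ((0 : Fin N → ℂ) i)) = 0 := by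
        funext i; simp
      rw [h1]
      exact Submodule.zero_mem _
  | add x y hx hy ihx ihy =>
      have h1 : (fun i => (starRingEnd ℂ) ((x + y) i))
          = (fun i => (starRingEnd ℂ) (x i)) + fun i => (starRingEnd ℂ) (y i) := by
        funext i; simp
      rw [h1]
      exact Submodule.add_mem _ ihx ihy
  | smul c x hx ih =>
      have h1 : (fun i => (starRingEnd ℂ) ((c • x) i))
          = (starRingEnd ℂ) c • fun i => (starRingEnd ℂ) (x i) := by
        funext i; simp
      rw [h1]
      exact Submodule.smul_mem _ _ ih

lemma gvec_real (m p : ℕ) (w v : Fin p → ℕ) (s : ℝ) (t : Fin p) (i : Fin (m + p)) :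
    (starRingEnd ℂ) (gvec m p w v s t i) = gvec m p w v s t i := by
  rw [gvec]
  split
  · exact Complex.conj_ofReal _
  · exact map_zero _

lemma pieri_core (m p : ℕ) (hm : 0 < m) (hp : 0 < p)
    (w v : Fin p → ℕ) (hw : IsPartition m p w) (hv : IsPartition m p v)
    (a : ℕ) (ha : 0 < a) (hsum : (∑ i, w i) + (∑ i, v i) + a = m * p)
    (s : ℝ) (hs : s ≠ 0)
    (H : Submodule ℂ (Fin (m + p) → ℂ))
    (hdim : Module.finrank ℂ H = p)
    (hW : InSchubert m p w (coordPlaneLow (m + p)) H)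
    (hV : InSchubert m p v (coordPlaneHigh (m + p)) H)
    (hosc : 1 ≤ Module.finrank ℂ ↥(H ⊓ oscPlane (m + p) (m + 1 - a) ((s : ℂ)))) :
    H = Submodule.span ℂ (Set.range (gvec m p w v s)) := by
  classical
  have hsC : ((s : ℂ)) ≠ 0 := Complex.ofReal_ne_zero.mpr hs
  have hwle := hw.1
  have hwanti := hw.2
  have hvle := hv.1
  have hvanti := hv.2
  -- `a ≤ m`
  have ham : a ≤ m := by
    by_contra ham
    have h0 : m + 1 - a = 0 := by omega
    rw [h0] at hosc
    have hbot : oscPlane (m + p) 0 ((s : ℂ)) = ⊥ := by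
      rw [oscPlane]
      rw [Set.range_eq_empty (fun j : Fin 0 => momentDeriv (m + p) (j : ℕ) ((s : ℂ)))]
      exact Submodule.span_empty
    rw [hbot, inf_bot_eq] at hosc
    rw [finrank_bot] at hosc
    omega
  -- basic index facts
  have hble : ∀ t : Fin p, bIdx m w t ≤ m + p := by
    intro t; have := t.2; rw [bIdx]; omega
  have hrevval : ∀ t : Fin p, ((t.rev : Fin p) : ℕ) = p - 1 - (t : ℕ) := by
    intro t; rw [Fin.val_rev]; omega
  -- reformulated Schubert hypotheses
  have hWc : ∀ t : Fin p,
      (t : ℕ) + 1 ≤ finrank ℂ ↥(H ⊓ coordPlaneLow (m + p) (bIdx m w t)) := fun t => hW t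
  have hVc : ∀ t : Fin p,
      p - (t : ℕ) ≤ finrank ℂ ↥(H ⊓ coordPlaneHigh (m + p) (m + (p - (t : ℕ)) - v t.rev)) := by
    intro t
    have h := hV t.rev
    have h2 : ((t.rev : Fin p) : ℕ) + 1 = p - (t : ℕ) := by
      rw [Fin.val_rev]; have := t.2; omega
    rw [h2] at h
    exact h
  have hAsupp : ∀ t : Fin p,
      H ⊓ coordPlaneLow (m + p) (bIdx m w t) ≤ suppLow (m + p) (bIdx m w t) :=
    fun t => le_trans inf_le_right (coordPlaneLow_le_suppLow (m + p) _)
  have hBsupp : ∀ t : Fin p,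
      H ⊓ coordPlaneHigh (m + p) (m + (p - (t : ℕ)) - v t.rev) ≤ suppHigh (m + p) (cIdx v t) := by
    intro t
    have h1 : cIdx v t = (m + p) - (m + (p - (t : ℕ)) - v t.rev) := by
      have h2 := hvle t.rev
      have h3 := t.2
      show (t : ℕ) + v t.rev = _
      omega
    rw [h1]
    exact le_trans inf_le_right (coordPlaneHigh_le_suppHigh (m + p) _)
  -- all intervals nonempty
  have hne : ∀ t : Fin p, cIdx v t < bIdx m w t := by
    intro t
    by_contra hcon
    push_neg at hcon
    have h1 := hWc t
    have h2 := hVc t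
    have h3 := rank_add_rank_le (m + p) H _ _ (bIdx m w t) (cIdx v t) hcon
      inf_le_left inf_le_left (hAsupp t) (hBsupp t)
    rw [hdim] at h3
    have := t.2
    omega
  -- `c` is strictly monotone
  have hcmono : ∀ t1 t2 : Fin p, (t1 : ℕ) < (t2 : ℕ) → cIdx v t1 < cIdx v t2 := by
    intro t1 t2 h
    have hle : t2.rev ≤ t1.rev := by
      rw [Fin.le_def, Fin.val_rev, Fin.val_rev]; omega
    have hvv := hvanti hle
    rw [cIdx, cIdx]; omega
  -- boundary containments
  have hplt : p - 1 < p := by omega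
  have hHlow : ∀ i : Fin (m + p), bIdx m w ⟨p - 1, hplt⟩ ≤ (i : ℕ) →
      ∀ x ∈ H, x i = 0 := by
    intro i hi x hx
    have h1 := hWc ⟨p - 1, hplt⟩
    have h2 : ((⟨p - 1, hplt⟩ : Fin p) : ℕ) = p - 1 := rfl
    have h3 : H ⊓ coordPlaneLow (m + p) (bIdx m w ⟨p - 1, hplt⟩) = H :=
      Submodule.eq_of_le_of_finrank_le inf_le_left (by rw [hdim]; omega)
    rw [← h3] at hx
    exact hAsupp _ hx i hi
  have hHhigh : ∀ i : Fin (m + p), (i : ℕ) < cIdx v ⟨0, hp⟩ →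
      ∀ x ∈ H, x i = 0 := by
    intro i hi x hx
    have h1 := hVc ⟨0, hp⟩
    have h2 : ((⟨0, hp⟩ : Fin p) : ℕ) = 0 := rfl
    have h3 : H ⊓ coordPlaneHigh (m + p) (m + (p - ((⟨0, hp⟩ : Fin p) : ℕ)) - v (⟨0, hp⟩ : Fin p).rev) = H :=
      Submodule.eq_of_le_of_finrank_le inf_le_left (by rw [hdim]; omega)
    rw [← h3] at hx
    exact hBsupp _ hx i hi
  -- the distinguished vector u
  have hnt : Nontrivial ↥(H ⊓ oscPlane (m + p) (m + 1 - a) ((s : ℂ))) := by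
    apply Module.nontrivial_of_finrank_pos (R := ℂ)
    omega
  obtain ⟨x0, hx0⟩ := exists_ne (0 : ↥(H ⊓ oscPlane (m + p) (m + 1 - a) ((s : ℂ))))
  have hu : (x0 : Fin (m + p) → ℂ) ∈ H := x0.2.1
  have huK : (x0 : Fin (m + p) → ℂ) ∈ oscPlane (m + p) (m + 1 - a) ((s : ℂ)) := x0.2.2
  set u : Fin (m + p) → ℂ := (x0 : Fin (m + p) → ℂ) with hudef
  have hune : u ≠ 0 := by
    intro h
    exact hx0 (Subtype.ext h)
  -- the polynomial q
  obtain ⟨q, hqmem, hqeq⟩ := Submodule.mem_map.mp (oscPlane_le_map (m + p) (m + 1 - a) ((s : ℂ)) hsC huK)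
  have hueq : ∀ i : Fin (m + p), u i = q.eval ((i : ℕ) : ℂ) * ((s : ℂ)) ^ (i : ℕ) := by
    intro i
    rw [← hqeq]
    rfl
  have hqne : q ≠ 0 := by
    rintro rfl
    apply hune
    funext i
    rw [hueq i]
    simp
  have hqdeg : q.natDegree ≤ m - a := by
    have h1 := Polynomial.mem_degreeLT.mp hqmem
    have h2 := (Polynomial.natDegree_lt_iff_degree_lt hqne).mpr h1
    omega
  -- the gap decomposition
  have hkey : ∀ t1 t2 : Fin p, (t1 : ℕ) + 1 = (t2 : ℕ) → bIdx m w t1 ≤ cIdx v t2 →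
      (∀ i : Fin (m + p), bIdx m w t1 ≤ (i : ℕ) → (i : ℕ) < cIdx v t2 → u i = 0) ∧
        (fun i : Fin (m + p) => if (i : ℕ) < bIdx m w t1 then u i else 0) ∈ H := by
    intro t1 t2 h12 hbc
    apply decomp_trunc (m + p) H (H ⊓ coordPlaneLow (m + p) (bIdx m w t1))
      (H ⊓ coordPlaneHigh (m + p) (m + (p - (t2 : ℕ)) - v t2.rev)) (bIdx m w t1) (cIdx v t2)
      hbc inf_le_left inf_le_left (hAsupp t1) (hBsupp t2) ?_ u hu
    have h1 := hWc t1
    have h2 := hVc t2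
    have h3 := t2.2
    rw [hdim]
    omega
  -- every element of `zSet` is a root of `q`
  have hroot : ∀ j ∈ zSet m p w v, q.eval ((j : ℕ) : ℂ) = 0 := by
    intro j hj
    rw [zSet, Finset.mem_sdiff, Finset.mem_range] at hj
    obtain ⟨hjN, hjU⟩ := hj
    have hjU' : ∀ t : Fin p, ¬ (cIdx v t ≤ j ∧ j < bIdx m w t) := by
      intro t hc
      exact hjU (Finset.mem_biUnion.mpr ⟨t, Finset.mem_univ t, Finset.mem_Ico.mpr hc⟩)
    have hui : u ⟨j, hjN⟩ = 0 := by
      rcases lt_or_ge j (cIdx v ⟨0, hp⟩) with hlt | hge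
      · exact hHhigh ⟨j, hjN⟩ hlt u hu
      · set F := Finset.univ.filter (fun t : Fin p => cIdx v t ≤ j) with hF
        have hFne : F.Nonempty := ⟨⟨0, hp⟩, by simp [hF, hge]⟩
        set tstar := F.max' hFne with htstar
        have ht1 : cIdx v tstar ≤ j := (Finset.mem_filter.mp (F.max'_mem hFne)).2
        have ht2 : bIdx m w tstar ≤ j := by
          by_contra hcon
          push_neg at hcon
          exact hjU' tstar ⟨ht1, hcon⟩
        rcases Nat.lt_or_ge ((tstar : ℕ) + 1) p with hlt2 | hge2
        · have ht3 : j < cIdx v ⟨(tstar : ℕ) + 1, hlt2⟩ := by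
            by_contra hcon
            push_neg at hcon
            have hmem : (⟨(tstar : ℕ) + 1, hlt2⟩ : Fin p) ∈ F :=
              Finset.mem_filter.mpr ⟨Finset.mem_univ _, hcon⟩
            have hle := F.le_max' _ hmem
            rw [Fin.le_def] at hle
            simp only [← htstar] at hle
            omega
          exact (hkey tstar ⟨(tstar : ℕ) + 1, hlt2⟩ rfl (by omega)).1 ⟨j, hjN⟩ ht2 ht3
        · have heq : tstar = ⟨p - 1, hplt⟩ := by
            apply Fin.ext
            have := tstar.2
            show (tstar : ℕ) = p - 1
            omega
          rw [heq] at ht2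
          exact hHlow ⟨j, hjN⟩ ht2 u hu
    have h5 := hueq ⟨j, hjN⟩
    rw [hui] at h5
    have hsp : ((s : ℂ)) ^ j ≠ 0 := pow_ne_zero _ hsC
    exact (mul_eq_zero.mp h5.symm).resolve_right hsp
  -- cardinality computations
  have hUsub : unionI m w v ⊆ Finset.range (m + p) := by
    intro j hj
    rw [unionI, Finset.mem_biUnion] at hj
    obtain ⟨t, -, hmem⟩ := hj
    rw [Finset.mem_Ico] at hmem
    rw [Finset.mem_range]
    have := hble t
    omega
  have hsumcard : ∑ t : Fin p, (bIdx m w t - cIdx v t) = p + a := by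
    have h2 : ((∑ t : Fin p, (bIdx m w t - cIdx v t) : ℕ) : ℤ)
        = ∑ t : Fin p, (((m : ℤ) + 1) - (w t : ℤ) - (v t.rev : ℤ)) := by
      rw [Nat.cast_sum]
      apply Finset.sum_congr rfl
      intro t _
      rw [Nat.cast_sub (le_of_lt (hne t))]
      rw [bIdx, cIdx]
      have h3 := hwle t
      have h4 := hvle t.rev
      have h3' : ((m + ((t : ℕ) + 1) - w t : ℕ) : ℤ) = (m : ℤ) + (t : ℤ) + 1 - (w t : ℤ) := by
        rw [Nat.cast_sub (by omega)]
        push_cast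
        ring
      have h4' : (((t : ℕ) + v t.rev : ℕ) : ℤ) = (t : ℤ) + (v t.rev : ℤ) := by push_cast; ring
      rw [h3', h4']
      ring
    have h3 : ∑ t : Fin p, (((m : ℤ) + 1) - (w t : ℤ) - (v t.rev : ℤ))
        = (p : ℤ) * ((m : ℤ) + 1) - (∑ t : Fin p, (w t : ℤ)) - ∑ t : Fin p, (v t.rev : ℤ) := by
      rw [Finset.sum_sub_distrib, Finset.sum_sub_distrib, Finset.sum_const, Finset.card_univ,
        Fintype.card_fin]
      push_cast
      ring
    have h5 : ∑ t : Fin p, ((v t.rev : ℤ)) = ∑ i : Fin p, (v i : ℤ) :=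
      Equiv.sum_comp Fin.revPerm (fun i => (v i : ℤ))
    have h7 : (∑ t : Fin p, (w t : ℤ)) + (∑ t : Fin p, (v t : ℤ)) + (a : ℤ)
        = (m : ℤ) * (p : ℤ) := by exact_mod_cast hsum
    have h8 : ((∑ t : Fin p, (bIdx m w t - cIdx v t) : ℕ) : ℤ) = ((p + a : ℕ) : ℤ) := by
      rw [h2, h3, h5]
      push_cast
      linear_combination -h7
    exact Nat.cast_injective h8
  have hUcard : (unionI m w v).card ≤ p + a := by
    rw [unionI]
    calc (Finset.univ.biUnion fun t : Fin p => Finset.Ico (cIdx v t) (bIdx m w t)).card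
        ≤ ∑ t : Fin p, (Finset.Ico (cIdx v t) (bIdx m w t)).card := Finset.card_biUnion_le
      _ = ∑ t : Fin p, (bIdx m w t - cIdx v t) := by
          apply Finset.sum_congr rfl; intro t _; rw [Nat.card_Ico]
      _ = p + a := hsumcard
  have hZcard : m - a ≤ (zSet m p w v).card := by
    rw [zSet, Finset.card_sdiff_of_subset hUsub, Finset.card_range]
    omega
  -- `q` has at most `m - a` roots
  have hZle : (zSet m p w v).card ≤ m - a := by
    by_contra hcon
    push_neg at hcon
    apply hqne
    apply Polynomial.eq_zero_of_natDegree_lt_card_of_eval_eq_zero' q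
      ((zSet m p w v).image (Nat.cast : ℕ → ℂ))
    · intro i hi
      obtain ⟨z, hz, rfl⟩ := Finset.mem_image.mp hi
      exact hroot z hz
    · rw [Finset.card_image_of_injective _ Nat.cast_injective]
      omega
  have hZeq : (zSet m p w v).card = m - a := le_antisymm hZle hZcard
  -- no overlaps between consecutive intervals
  have hgap : ∀ t1 t2 : Fin p, (t1 : ℕ) + 1 = (t2 : ℕ) → bIdx m w t1 ≤ cIdx v t2 := by
    intro t1 t2 h12
    by_contra hcon
    push_neg at hcon
    set J : Fin p → Finset ℕ := fun t =>
      if t = t2 then (Finset.Ico (cIdx v t) (bIdx m w t)).erase (cIdx v t2)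
      else Finset.Ico (cIdx v t) (bIdx m w t) with hJ
    have ht1ne : t1 ≠ t2 := by
      intro h
      rw [h] at h12
      omega
    have hUJ : unionI m w v = Finset.univ.biUnion J := by
      apply Finset.Subset.antisymm
      · intro j hj
        rw [unionI, Finset.mem_biUnion] at hj
        obtain ⟨t, -, hmem⟩ := hj
        by_cases hjx : j = cIdx v t2
        · subst hjx
          apply Finset.mem_biUnion.mpr ⟨t1, Finset.mem_univ _, ?_⟩
          simp only [hJ]
          rw [if_neg ht1ne, Finset.mem_Ico]
          exact ⟨le_of_lt (hcmono t1 t2 (by omega)), hcon⟩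
        · apply Finset.mem_biUnion.mpr ⟨t, Finset.mem_univ _, ?_⟩
          simp only [hJ]
          by_cases ht : t = t2
          · subst ht
            rw [if_pos rfl]
            exact Finset.mem_erase.mpr ⟨hjx, hmem⟩
          · rw [if_neg ht]
            exact hmem
      · intro j hj
        rw [Finset.mem_biUnion] at hj
        obtain ⟨t, -, hmem⟩ := hj
        apply Finset.mem_biUnion.mpr ⟨t, Finset.mem_univ _, ?_⟩
        simp only [hJ] at hmem
        by_cases ht : t = t2
        · rw [if_pos ht] at hmem
          exact Finset.erase_subset _ _ hmem
        · rw [if_neg ht] at hmem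
          exact hmem
    have hlt : (Finset.univ.biUnion J).card < p + a := by
      calc (Finset.univ.biUnion J).card ≤ ∑ t : Fin p, (J t).card := Finset.card_biUnion_le
        _ < ∑ t : Fin p, (Finset.Ico (cIdx v t) (bIdx m w t)).card := by
            apply Finset.sum_lt_sum
            · intro t _
              simp only [hJ]
              by_cases ht : t = t2
              · rw [if_pos ht, ht]
                exact Finset.card_erase_le
              · rw [if_neg ht]
            · refine ⟨t2, Finset.mem_univ _, ?_⟩
              simp only [hJ]
              apply Finset.card_erase_lt_of_mem
              rw [Finset.mem_Ico]
              exact ⟨le_rfl, hne t2⟩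
        _ = p + a := by
            rw [← hsumcard]
            apply Finset.sum_congr rfl
            intro t _
            rw [Nat.card_Ico]
    rw [zSet, Finset.card_sdiff_of_subset hUsub, Finset.card_range, hUJ] at hZeq
    omega
  -- factor q
  have hPdvd : (∏ z ∈ zSet m p w v, (X - C ((z : ℕ) : ℂ))) ∣ q := by
    have hM : ((zSet m p w v).val.map (fun z : ℕ => ((z : ℕ) : ℂ))) ≤ q.roots := by
      rw [Multiset.le_iff_count]
      intro r
      by_cases hr : r ∈ (zSet m p w v).val.map (fun z : ℕ => ((z : ℕ) : ℂ))
      · have h1 : ((zSet m p w v).val.map (fun z : ℕ => ((z : ℕ) : ℂ))).count r ≤ 1 := by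
          apply Multiset.nodup_iff_count_le_one.mp
          exact Multiset.Nodup.map (fun x y h => Nat.cast_injective h) (zSet m p w v).nodup
        obtain ⟨z, hz, rfl⟩ := Multiset.mem_map.mp hr
        have h2 : ((z : ℕ) : ℂ) ∈ q.roots := by
          rw [Polynomial.mem_roots hqne]
          exact hroot z hz
        have h3 := Multiset.one_le_count_iff_mem.mpr h2
        omega
      · rw [Multiset.count_eq_zero_of_notMem hr]
        omega
    have h4 := (Multiset.prod_X_sub_C_dvd_iff_le_roots hqne _).mpr hM
    rw [Multiset.map_map] at h4
    exact h4
  obtain ⟨h0, hq0⟩ := hPdvd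
  have hPne : (∏ z ∈ zSet m p w v, (X - C ((z : ℕ) : ℂ))) ≠ 0 := by
    apply Finset.prod_ne_zero_iff.mpr
    intro z _
    exact Polynomial.X_sub_C_ne_zero _
  have hh0ne : h0 ≠ 0 := by
    rintro rfl
    rw [mul_zero] at hq0
    exact hqne hq0
  have hPdeg : (∏ z ∈ zSet m p w v, (X - C ((z : ℕ) : ℂ))).natDegree = m - a := by
    rw [Polynomial.natDegree_prod _ _ (fun z _ => Polynomial.X_sub_C_ne_zero _), ← hZeq]
    rw [Finset.sum_congr rfl (fun z _ => Polynomial.natDegree_X_sub_C ((z : ℕ) : ℂ))]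
    simp
  have hdeg2 : h0.natDegree = 0 := by
    have h5 := Polynomial.natDegree_mul hPne hh0ne
    rw [← hq0] at h5
    omega
  obtain ⟨cc, hcc⟩ := Polynomial.natDegree_eq_zero.mp hdeg2
  have hccne : cc ≠ 0 := by
    rintro rfl
    rw [map_zero] at hcc
    rw [← hcc, mul_zero] at hq0
    exact hqne hq0
  have hqev : ∀ j : ℕ, q.eval ((j : ℕ) : ℂ) = cc * ∏ z ∈ zSet m p w v, (((j : ℕ) : ℂ) - ((z : ℕ) : ℂ)) := by
    intro j
    rw [hq0, ← hcc, Polynomial.eval_mul, Polynomial.eval_C, Polynomial.eval_prod]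
    rw [mul_comm]
    congr 1
    apply Finset.prod_congr rfl
    intro z _
    rw [Polynomial.eval_sub, Polynomial.eval_X, Polynomial.eval_C]
  -- coordinates of u in terms of rFun
  have huval : ∀ i : Fin (m + p), u i = cc * ((rFun m p w v s (i : ℕ) : ℝ) : ℂ) := by
    intro i
    rw [hueq i, hqev (i : ℕ), rFun]
    have hcast : (((∏ z ∈ zSet m p w v, (((i : ℕ) : ℝ) - (z : ℝ))) * s ^ (i : ℕ) : ℝ) : ℂ)
        = (∏ z ∈ zSet m p w v, (((i : ℕ) : ℂ) - ((z : ℕ) : ℂ))) * ((s : ℂ)) ^ (i : ℕ) := by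
      push_cast
      ring
    rw [hcast]
    ring
  -- truncations of u belong to H
  have htr : ∀ t : Fin p, (fun i : Fin (m + p) => if (i : ℕ) < bIdx m w t then u i else 0) ∈ H := by
    intro t
    rcases Nat.lt_or_ge ((t : ℕ) + 1) p with hlt | hge
    · exact (hkey t ⟨(t : ℕ) + 1, hlt⟩ rfl (hgap t ⟨(t : ℕ) + 1, hlt⟩ rfl)).2
    · have heq : t = ⟨p - 1, hplt⟩ := by
        apply Fin.ext
        have := t.2
        show (t : ℕ) = p - 1
        omega
      subst heq
      have h1 : (fun i : Fin (m + p) => if (i : ℕ) < bIdx m w ⟨p - 1, hplt⟩ then u i else 0) = u := by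
        funext i
        by_cases hi : (i : ℕ) < bIdx m w ⟨p - 1, hplt⟩
        · rw [if_pos hi]
        · rw [if_neg hi]
          exact (hHlow i (not_lt.mp hi) u hu).symm
      rw [h1]
      exact hu
  have htrc : ∀ t : Fin p, (fun i : Fin (m + p) => if (i : ℕ) < cIdx v t then u i else 0) ∈ H := by
    intro t
    rcases Nat.eq_zero_or_pos (t : ℕ) with h0 | hpos
    · have heq : t = ⟨0, hp⟩ := by apply Fin.ext; exact h0
      subst heq
      have h1 : (fun i : Fin (m + p) => if (i : ℕ) < cIdx v ⟨0, hp⟩ then u i else 0) = 0 := by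
        funext i
        by_cases hi : (i : ℕ) < cIdx v ⟨0, hp⟩
        · rw [if_pos hi]
          exact hHhigh i hi u hu
        · rw [if_neg hi]
          rfl
      rw [h1]
      exact Submodule.zero_mem H
    · have hprev : (t : ℕ) - 1 < p := by have := t.2; omega
      have h12 : ((⟨(t : ℕ) - 1, hprev⟩ : Fin p) : ℕ) + 1 = (t : ℕ) := by
        show (t : ℕ) - 1 + 1 = (t : ℕ)
        omega
      have hbc := hgap ⟨(t : ℕ) - 1, hprev⟩ t h12
      have hvan := (hkey ⟨(t : ℕ) - 1, hprev⟩ t h12 hbc).1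
      have h1 : (fun i : Fin (m + p) => if (i : ℕ) < cIdx v t then u i else 0)
          = (fun i : Fin (m + p) => if (i : ℕ) < bIdx m w ⟨(t : ℕ) - 1, hprev⟩ then u i else 0) := by
        funext i
        by_cases hb : (i : ℕ) < bIdx m w ⟨(t : ℕ) - 1, hprev⟩
        · rw [if_pos hb, if_pos (lt_of_lt_of_le hb hbc)]
        · rw [if_neg hb]
          by_cases hc : (i : ℕ) < cIdx v t
          · rw [if_pos hc, hvan i (not_lt.mp hb) hc]
          · rw [if_neg hc]
      rw [h1]
      exact htr ⟨(t : ℕ) - 1, hprev⟩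
  -- the explicit generators belong to H
  have hgmem : ∀ t : Fin p, gvec m p w v s t ∈ H := by
    intro t
    have hdt : gvec m p w v s t = cc⁻¹ •
        ((fun i : Fin (m + p) => if (i : ℕ) < bIdx m w t then u i else 0)
          - fun i : Fin (m + p) => if (i : ℕ) < cIdx v t then u i else 0) := by
      funext i
      simp only [gvec, Pi.smul_apply, Pi.sub_apply, smul_eq_mul]
      rcases lt_or_ge (i : ℕ) (cIdx v t) with h1 | h1
      · rw [if_neg (by omega), if_pos (lt_trans h1 (hne t)), if_pos h1]
        ring
      · rcases lt_or_ge (i : ℕ) (bIdx m w t) with h2 | h2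
        · rw [if_pos ⟨h1, h2⟩, if_pos h2, if_neg (by omega)]
          rw [huval i]
          rw [sub_zero, ← mul_assoc, inv_mul_cancel₀ hccne, one_mul]
        · rw [if_neg (by omega), if_neg (by omega), if_neg (by omega)]
          ring
    rw [hdt]
    exact Submodule.smul_mem _ _ (Submodule.sub_mem _ (htr t) (htrc t))
  -- nonvanishing of rFun on the intervals
  have hrne : ∀ j : ℕ, j ∈ unionI m w v → rFun m p w v s j ≠ 0 := by
    intro j hjU
    rw [rFun]
    apply mul_ne_zero
    · rw [Finset.prod_ne_zero_iff]
      intro z hz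
      intro hzero
      have h1 : (j : ℝ) = (z : ℝ) := by linarith [sub_eq_zero.mp hzero]
      have h2 : j = z := Nat.cast_injective h1
      subst h2
      rw [zSet, Finset.mem_sdiff] at hz
      exact hz.2 hjU
    · exact pow_ne_zero _ hs
  -- linear independence
  have hli : LinearIndependent ℂ (gvec m p w v s) := by
    rw [Fintype.linearIndependent_iff]
    intro lam hlam t
    have hct : cIdx v t < m + p := lt_of_lt_of_le (hne t) (hble t)
    have hcf := congrFun hlam ⟨cIdx v t, hct⟩
    rw [Finset.sum_apply] at hcf
    have hz0 : (0 : Fin (m + p) → ℂ) ⟨cIdx v t, hct⟩ = 0 := rfl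
    rw [hz0] at hcf
    rw [Finset.sum_eq_single_of_mem t (Finset.mem_univ t)] at hcf
    · simp only [Pi.smul_apply, smul_eq_mul, gvec] at hcf
      rw [if_pos ⟨le_rfl, hne t⟩] at hcf
      rcases mul_eq_zero.mp hcf with h | h
      · exact h
      · exfalso
        apply hrne (cIdx v t) ?_ (by exact_mod_cast h)
        rw [unionI, Finset.mem_biUnion]
        exact ⟨t, Finset.mem_univ t, Finset.mem_Ico.mpr ⟨le_rfl, hne t⟩⟩
    · intro t' _ htne
      simp only [Pi.smul_apply, smul_eq_mul, gvec]
      rw [if_neg, mul_zero]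
      rcases Nat.lt_or_ge (t' : ℕ) (t : ℕ) with hlt | hge
      · -- t' < t: bIdx t' ≤ cIdx t
        have hblec : bIdx m w t' ≤ cIdx v t := by
          have hlt2 : (t' : ℕ) + 1 < p ∨ (t' : ℕ) + 1 = (t : ℕ) ∧ True := by
            have := t.2; omega
          have hnxt : (t' : ℕ) + 1 < p := by have := t.2; omega
          have hg := hgap t' ⟨(t' : ℕ) + 1, hnxt⟩ rfl
          rcases Nat.eq_or_lt_of_le (Nat.succ_le_of_lt hlt) with he | hl
          · have : (⟨(t' : ℕ) + 1, hnxt⟩ : Fin p) = t := by apply Fin.ext; exact he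
            rw [this] at hg
            exact hg
          · have hcm := hcmono ⟨(t' : ℕ) + 1, hnxt⟩ t hl
            omega
        intro hcontra
        omega
      · have hne2 : (t' : ℕ) ≠ (t : ℕ) := fun h => htne (Fin.ext h)
        have hcm := hcmono t t' (by omega)
        intro hcontra
        omega
  have hspan : Submodule.span ℂ (Set.range (gvec m p w v s)) ≤ H := by
    rw [Submodule.span_le]
    rintro x ⟨t, rfl⟩
    exact hgmem t
  have hrk : finrank ℂ ↥(Submodule.span ℂ (Set.range (gvec m p w v s))) = p := by
    rw [finrank_span_eq_card hli, Fintype.card_fin]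
  exact (Submodule.eq_of_le_of_finrank_le hspan (by rw [hdim, hrk])).symm


end PieriAux

/-- **Base case of the induction proving Theorem 1.** For partitions `w, v` and a
positive integer `a` with `|w| + |v| + a = m·p`, and a nonzero real number `s`, the
intersection `σ_w(F_•(0)) ∩ σ_v(F_•(∞)) ∩ τ_a(s)` contains at most one `p`-plane, and
if such a `p`-plane exists it is real. -/
theorem pieri_base_case
    (m p : ℕ) (hm : 0 < m) (hp : 0 < p)
    (w v : Fin p → ℕ) (hw : IsPartition m p w) (hv : IsPartition m p v)
    (a : ℕ) (ha : 0 < a) (hsum : (∑ i, w i) + (∑ i, v i) + a = m * p)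
    (s : ℝ) (hs : s ≠ 0) :
    {H : Submodule ℂ (Fin (m + p) → ℂ) |
        Module.finrank ℂ H = p ∧
        InSchubert m p w (coordPlaneLow (m + p)) H ∧
        InSchubert m p v (coordPlaneHigh (m + p)) H ∧
        1 ≤ Module.finrank ℂ
          ↥(H ⊓ oscPlane (m + p) (m + 1 - a) ((s : ℂ)))}.Subsingleton ∧
    ∀ H : Submodule ℂ (Fin (m + p) → ℂ),
      Module.finrank ℂ H = p →
      InSchubert m p w (coordPlaneLow (m + p)) H →
      InSchubert m p v (coordPlaneHigh (m + p)) H →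
      1 ≤ Module.finrank ℂ ↥(H ⊓ oscPlane (m + p) (m + 1 - a) ((s : ℂ))) →
      IsRealSubspace H := by
  constructor
  · intro H1 h1 H2 h2
    obtain ⟨d1, w1, v1, o1⟩ := h1
    obtain ⟨d2, w2, v2, o2⟩ := h2
    rw [pieri_core m p hm hp w v hw hv a ha hsum s hs H1 d1 w1 v1 o1,
      pieri_core m p hm hp w v hw hv a ha hsum s hs H2 d2 w2 v2 o2]
  · intro H hd hw' hv' ho
    rw [pieri_core m p hm hp w v hw hv a ha hsum s hs H hd hw' hv' ho]
    exact isReal_span _ (gvec_real m p w v s)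
end

section
/- Let m, p be positive integers and let H ⊆ ℂ^{m+p} be a p-dimensional subspace with basis h_1, …, h_p. Define f : ℂ → ℂ by f(s) = det of the (m+p) × (m+p) matrix whose first m rows are γ(s), γ′(s), …, γ^{(m−1)}(s) and whose last p rows are h_1, …, h_p. Then f is a polynomial function of s of degree at most mp, and for every s ∈ ℂ one has f(s) = 0 if and only if dim_ℂ(H ∩ K_m(s)) ≥ 1. Consequently, either H meets K_m(s) nontrivially for every s ∈ ℂ, or H meets K_m(s) nontrivially for at most mp values of s. -/
/-!
In the top block, entry `(i, j)` is a monomial of degree `j - i`, and vanishes when `j < i`.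
Giving column `j` the weight `max j p` and row `i` the weight `i` (top block) or `p` (rows of
`h`), every term of the Leibniz expansion has degree at most `∑ max j p - ∑ weights = m p`.
The rows `γ^{(i)}(s)` are independent (their leading `m × m` block is triangular with
diagonal `i!`), as are the `h_i`, so the determinant vanishes exactly when the two spans
meet. A nonzero polynomial of degree at most `m p` has at most `m p` roots.
-/

open Polynomial Finset

namespace Matrix

variable {n R : Type*} [Fintype n] [DecidableEq n] [CommRing R]

theorem natDegree_det_le_of_natDegree_add_le (M : Matrix n n R[X]) (a b : n → ℕ)
    (hM : ∀ i j, M i j ≠ 0 → (M i j).natDegree + b i ≤ a j) :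
    M.det.natDegree ≤ ∑ j, a j - ∑ i, b i := by
  rw [det_apply']
  refine natDegree_sum_le_of_forall_le _ _ fun σ _ => ?_
  by_cases hzero : ∃ j, M (σ j) j = 0
  · obtain ⟨j, hj⟩ := hzero
    rw [prod_eq_zero (f := fun i => M (σ i) i) (mem_univ j) hj, mul_zero, natDegree_zero]
    exact Nat.zero_le _
  push Not at hzero
  calc (↑↑(Equiv.Perm.sign σ) * ∏ j, M (σ j) j).natDegree
      ≤ (∏ j, M (σ j) j).natDegree := by
        refine natDegree_mul_le.trans ?_
        rw [natDegree_intCast, zero_add]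
    _ ≤ ∑ j, (M (σ j) j).natDegree := natDegree_prod_le _ _
    _ ≤ ∑ j, (a j - b (σ j)) :=
        sum_le_sum fun j _ => Nat.le_sub_of_add_le (hM _ _ (hzero j))
    _ = ∑ j, a j - ∑ j, b (σ j) :=
        sum_tsub_distrib _ fun j _ => le_of_add_le_right (hM _ _ (hzero j))
    _ = ∑ j, a j - ∑ i, b i := by rw [Equiv.sum_comp]

theorem of_fin_addCases {m p : ℕ} {α β : Type*} (u : Fin m → α → β) (v : Fin p → α → β) :
    (Matrix.of fun i j => Fin.addCases (motive := fun _ => β)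
      (fun i' => u i' j) (fun i' => v i' j) i) = Matrix.of (Fin.addCases u v) := by
  ext i j
  induction i using Fin.addCases <;> simp

theorem det_of_fin_addCases_eq_zero_iff {K : Type*} [Field K] {m p : ℕ}
    {u : Fin m → Fin (m + p) → K} {v : Fin p → Fin (m + p) → K}
    (hu : LinearIndependent K u) (hv : LinearIndependent K v) :
    (Matrix.of (Fin.addCases u v)).det = 0 ↔
      ¬Disjoint (Submodule.span K (Set.range u)) (Submodule.span K (Set.range v)) := by
  rw [← not_iff_not, not_not, ← ne_eq, ← isUnit_iff_ne_zero, ← isUnit_iff_isUnit_det,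
    ← linearIndependent_rows_iff_isUnit, ← linearIndependent_equiv finSumFinEquiv,
    linearIndependent_sum]
  have hl : (of (Fin.addCases u v)).row ∘ finSumFinEquiv ∘ Sum.inl = u := by
    funext i; simp
  have hr : (of (Fin.addCases u v)).row ∘ finSumFinEquiv ∘ Sum.inr = v := by
    funext i; simp
  simp only [Function.comp_assoc, hl, hr]
  tauto

end Matrix

theorem Polynomial.ncard_setOf_isRoot_le {R : Type*} [CommRing R] [IsDomain R] {q : R[X]}
    (hq : q ≠ 0) : {x | q.IsRoot x}.ncard ≤ q.natDegree := by
  classical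
  have : {x | q.IsRoot x} = ↑q.roots.toFinset := by
    ext x; simp [mem_roots hq]
  rw [this, Set.ncard_coe_finset]
  exact (Multiset.toFinset_card_le _).trans (card_roots' q)

theorem momentDeriv_apply_of_lt {N j : ℕ} (s : ℂ) {i : Fin N} (hi : (i : ℕ) < j) :
    momentDeriv N j s i = 0 := by
  simp [momentDeriv, Nat.descFactorial_eq_zero_iff_lt.mpr hi]

theorem linearIndependent_momentDeriv {N k : ℕ} (hk : k ≤ N) (s : ℂ) :
    LinearIndependent ℂ fun j : Fin k => momentDeriv N j s := by
  let A : Matrix (Fin k) (Fin k) ℂ := Matrix.of fun j i => momentDeriv N j s (Fin.castLE hk i)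
  have hA : A.IsUpperTriangular := fun j i hij => momentDeriv_apply_of_lt s hij
  have hdet : A.det ≠ 0 := by
    rw [Matrix.det_of_isUpperTriangular hA]
    exact prod_ne_zero_iff.mpr fun i _ => by
      simp [A, momentDeriv, Nat.descFactorial_self, Nat.factorial_ne_zero]
  have hrows : LinearIndependent ℂ A.row := by
    rwa [Matrix.linearIndependent_rows_iff_isUnit, Matrix.isUnit_iff_isUnit_det,
      isUnit_iff_ne_zero]
  exact LinearIndependent.of_comp (LinearMap.funLeft ℂ ℂ (Fin.castLE hk)) hrows

noncomputable def momentDerivPoly (N j : ℕ) : Fin N → ℂ[X] :=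
  fun i => C (Nat.descFactorial (i : ℕ) j : ℂ) * X ^ ((i : ℕ) - j)

theorem eval_momentDerivPoly (N j : ℕ) (s : ℂ) (i : Fin N) :
    (momentDerivPoly N j i).eval s = momentDeriv N j s i := by
  simp [momentDerivPoly, momentDeriv]

theorem natDegree_momentDerivPoly_add_le {N j : ℕ} {i : Fin N} (h : momentDerivPoly N j i ≠ 0) :
    (momentDerivPoly N j i).natDegree + j ≤ i := by
  have hji : j ≤ i := by
    by_contra! hij
    simp [momentDerivPoly, Nat.descFactorial_eq_zero_iff_lt.mpr hij] at h
  have := natDegree_C_mul_X_pow_le (Nat.descFactorial (i : ℕ) j : ℂ) ((i : ℕ) - j)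
  simp only [momentDerivPoly] at this ⊢
  omega

noncomputable def closedLoopPoly {m p : ℕ} (h : Fin p → Fin (m + p) → ℂ) : ℂ[X] :=
  (Matrix.of (Fin.addCases (fun i => momentDerivPoly (m + p) i) fun i j => C (h i j))).det

theorem eval_closedLoopPoly {m p : ℕ} (h : Fin p → Fin (m + p) → ℂ) (s : ℂ) :
    (closedLoopPoly h).eval s =
      (Matrix.of (Fin.addCases (fun i => momentDeriv (m + p) i s) h)).det := by
  rw [closedLoopPoly, ← coe_evalRingHom, RingHom.map_det]
  congr 1
  ext i j
  induction i using Fin.addCases <;> simp [eval_momentDerivPoly]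

theorem natDegree_closedLoopPoly_le {m p : ℕ} (h : Fin p → Fin (m + p) → ℂ) :
    (closedLoopPoly h).natDegree ≤ m * p := by
  -- dual weights of the maximal-degree assignment, which matches row `i < m` to column `i + p`
  have hbound := Matrix.natDegree_det_le_of_natDegree_add_le
    (Matrix.of (Fin.addCases (fun i => momentDerivPoly (m + p) i) fun i j => C (h i j)))
    (fun j => max (j : ℕ) p) (Fin.addCases (motive := fun _ => ℕ) (fun i => (i : ℕ)) fun _ => p)
    fun i j hij => by
      induction i using Fin.addCases with
      | left i =>
        simp only [Matrix.of_apply, Fin.addCases_left] at hij ⊢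
        exact (natDegree_momentDerivPoly_add_le hij).trans (le_max_left _ _)
      | right i => simp
  have hcols : ∑ j : Fin (m + p), max (j : ℕ) p = p * p + (m * p + ∑ k ∈ range m, k) := by
    rw [Fin.sum_univ_eq_sum_range (fun k => max k p), add_comm m p, sum_range_add,
      sum_congr rfl fun k hk => max_eq_right (mem_range.mp hk).le,
      sum_congr rfl fun k _ => max_eq_left (Nat.le_add_right p k), sum_add_distrib]
    simp
  have hrows : ∑ i : Fin (m + p), Fin.addCases (motive := fun _ => ℕ) (fun i => (i : ℕ))
      (fun _ => p) i = ∑ k ∈ range m, k + p * p := by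
    simp [Fin.sum_univ_add, Fin.sum_univ_eq_sum_range (fun k => k)]
  rw [closedLoopPoly]
  omega

theorem characteristic_polynomial_of_feedback_general
    (m p : ℕ)
    (H : Submodule ℂ (Fin (m + p) → ℂ))
    (h : Fin p → (Fin (m + p) → ℂ))
    (hind : LinearIndependent ℂ h) (hspan : Submodule.span ℂ (Set.range h) = H)
    (f : ℂ → ℂ)
    (hf : ∀ s : ℂ, f s = Matrix.det (Matrix.of fun i j : Fin (m + p) =>
      Fin.addCases (motive := fun _ => ℂ)
        (fun i' : Fin m => momentDeriv (m + p) (i' : ℕ) s j)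
        (fun i' : Fin p => h i' j) i)) :
    (∃ q : Polynomial ℂ, q.natDegree ≤ m * p ∧ ∀ s, f s = q.eval s) ∧
    (∀ s : ℂ, f s = 0 ↔ 1 ≤ Module.finrank ℂ ↥(H ⊓ oscPlane (m + p) m s)) ∧
    ((∀ s : ℂ, 1 ≤ Module.finrank ℂ ↥(H ⊓ oscPlane (m + p) m s)) ∨
      ({s : ℂ | 1 ≤ Module.finrank ℂ ↥(H ⊓ oscPlane (m + p) m s)}.Finite ∧
        {s : ℂ | 1 ≤ Module.finrank ℂ ↥(H ⊓ oscPlane (m + p) m s)}.ncard ≤ m * p)) := by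
  have hf' : ∀ s, f s = (Matrix.of (Fin.addCases (fun i => momentDeriv (m + p) i s) h)).det :=
    fun s => by rw [hf, Matrix.of_fin_addCases (fun i : Fin m => momentDeriv (m + p) i s) h]
  have heval : ∀ s, f s = (closedLoopPoly h).eval s := fun s => by
    rw [hf', eval_closedLoopPoly]
  have hzero : ∀ s, f s = 0 ↔ 1 ≤ Module.finrank ℂ ↥(H ⊓ oscPlane (m + p) m s) := fun s => by
    rw [hf', Matrix.det_of_fin_addCases_eq_zero_iff (linearIndependent_momentDeriv
      (Nat.le_add_right m p) s) hind, hspan, Submodule.one_le_finrank_iff, disjoint_iff,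
      inf_comm, oscPlane]
  refine ⟨⟨_, natDegree_closedLoopPoly_le h, heval⟩, hzero, ?_⟩
  simp only [← hzero, heval]
  by_cases hq : closedLoopPoly h = 0
  · simp [hq]
  · exact Or.inr ⟨finite_setOfPred_isRoot hq,
      (ncard_setOf_isRoot_le hq).trans (natDegree_closedLoopPoly_le h)⟩

/-- **The closed-loop characteristic polynomial.** Let `H ⊆ ℂ^{m+p}` be a
`p`-dimensional subspace with basis `h_1, …, h_p`, and let `f(s)` be the determinant
of the `(m+p) × (m+p)` matrix whose first `m` rows are `γ(s), γ'(s), …, γ^{(m-1)}(s)`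
and whose last `p` rows are `h_1, …, h_p`.  Then `f` is a polynomial of degree at most
`m·p`, and `f(s) = 0` if and only if `dim_ℂ(H ∩ K_m(s)) ≥ 1`.  Consequently either `H`
meets `K_m(s)` nontrivially for every `s`, or it does so for at most `m·p` values
of `s`. -/
theorem characteristic_polynomial_of_feedback
    (m p : ℕ) (hm : 0 < m) (hp : 0 < p)
    (H : Submodule ℂ (Fin (m + p) → ℂ)) (hH : Module.finrank ℂ H = p)
    (h : Fin p → (Fin (m + p) → ℂ))
    (hind : LinearIndependent ℂ h) (hspan : Submodule.span ℂ (Set.range h) = H)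
    (f : ℂ → ℂ)
    (hf : ∀ s : ℂ, f s = Matrix.det (Matrix.of fun i j : Fin (m + p) =>
      Fin.addCases (motive := fun _ => ℂ)
        (fun i' : Fin m => momentDeriv (m + p) (i' : ℕ) s j)
        (fun i' : Fin p => h i' j) i)) :
    (∃ q : Polynomial ℂ, q.natDegree ≤ m * p ∧ ∀ s, f s = q.eval s) ∧
    (∀ s : ℂ, f s = 0 ↔ 1 ≤ Module.finrank ℂ ↥(H ⊓ oscPlane (m + p) m s)) ∧
    ((∀ s : ℂ, 1 ≤ Module.finrank ℂ ↥(H ⊓ oscPlane (m + p) m s)) ∨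
      ({s : ℂ | 1 ≤ Module.finrank ℂ ↥(H ⊓ oscPlane (m + p) m s)}.Finite ∧
        {s : ℂ | 1 ≤ Module.finrank ℂ ↥(H ⊓ oscPlane (m + p) m s)}.ncard ≤ m * p)) :=
  characteristic_polynomial_of_feedback_general m p H h hind hspan f hf
end
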